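/- arXiv:2512.15104 — 6 statements merged into one kernel-verified Lean document; each statement's English description precedes it below -/
import Mathlib

section
/- Let (E,d) be a metric space, ρ ∈ (0,1), R > 0, n ≥ 1, and let g₁, …, g_n : E → E be maps each satisfying d(g_k(y), g_k(y')) ≤ ρ·max(R, d(y,y')) for all y,y' ∈ E and 1 ≤ k ≤ n. Then for all y,y' ∈ E, d(g_n∘⋯∘g₁(y), g_n∘⋯∘g₁(y')) ≤ max(R, ρⁿ·d(y,y')). In particular, if d(y,y') ≤ R/ρⁿ, then d(g_n∘⋯∘g₁(y), g_n∘⋯∘g₁(y')) ≤ R. -/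
/-- `compSeq g n = g n ∘ ⋯ ∘ g 1` (and the identity for `n = 0`). -/
def compSeq {E : Type*} (g : ℕ → E → E) : ℕ → E → E
  | 0 => id
  | n+1 => g (n+1) ∘ compSeq g n

lemma compSeq_bound {E : Type*} [MetricSpace E] (ρ R : ℝ) (hρ : ρ ∈ Set.Ioo (0:ℝ) 1)
    (hR : 0 < R) (n : ℕ) (g : ℕ → E → E)
    (hg : ∀ k, 1 ≤ k → k ≤ n → ∀ y y' : E,
      dist (g k y) (g k y') ≤ ρ * max R (dist y y')) :
    ∀ y y' : E, dist (compSeq g n y) (compSeq g n y') ≤ max R (ρ ^ n * dist y y') := by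
  induction n with
  | zero => intro y y'; simp [compSeq]
  | succ n ih =>
    intro y y'
    have h1 := ih (fun k h1 h2 => hg k h1 (h2.trans (Nat.le_succ n))) y y'
    have h2 := hg (n+1) (Nat.le_add_left 1 n) le_rfl (compSeq g n y) (compSeq g n y')
    have h3 : max R (dist (compSeq g n y) (compSeq g n y'))
        ≤ max R (ρ ^ n * dist y y') := by
      rw [max_le_iff]
      exact ⟨le_max_left _ _, h1⟩
    have h4 : ρ * max R (ρ ^ n * dist y y') ≤ max R (ρ ^ (n+1) * dist y y') := by
      rcases max_cases R (ρ ^ n * dist y y') with ⟨he, _⟩ | ⟨he, _⟩ <;> rw [he]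
      · exact le_max_of_le_left (by nlinarith [hρ.1, hρ.2])
      · exact le_max_of_le_right (le_of_eq (by ring))
    calc dist (compSeq g (n+1) y) (compSeq g (n+1) y')
        ≤ ρ * max R (dist (compSeq g n y) (compSeq g n y')) := h2
      _ ≤ ρ * max R (ρ ^ n * dist y y') := mul_le_mul_of_nonneg_left h3 hρ.1.le
      _ ≤ max R (ρ ^ (n+1) * dist y y') := h4

theorem stmt_6 {E : Type*} [MetricSpace E] (ρ R : ℝ) (hρ : ρ ∈ Set.Ioo (0:ℝ) 1)
    (hR : 0 < R) (n : ℕ) (hn : 1 ≤ n) (g : ℕ → E → E)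
    (hg : ∀ k, 1 ≤ k → k ≤ n → ∀ y y' : E,
      dist (g k y) (g k y') ≤ ρ * max R (dist y y')) :
    ∀ y y' : E,
      dist (compSeq g n y) (compSeq g n y') ≤ max R (ρ ^ n * dist y y') ∧
      (dist y y' ≤ R / ρ ^ n → dist (compSeq g n y) (compSeq g n y') ≤ R) := by
  intro y y'
  have h := compSeq_bound ρ R hρ hR n g hg y y'
  refine ⟨h, fun hd => ?_⟩
  have hpow : (0:ℝ) < ρ ^ n := pow_pos hρ.1 n
  have : ρ ^ n * dist y y' ≤ R := by
    rw [← le_div_iff₀' hpow]; exact hd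
  exact h.trans (max_le le_rfl this)
end

section
/- Consider the model f(y,x,e) = μ(y,x) + σ(x)e + ℓ(x) on E = ℝ^k, where: μ : ℝ^k × F → ℝ^k is measurable and satisfies |μ(y₁,x) − μ(y₂,x)| ≤ ρ|y₁−y₂| + R for all x ∈ F, y₁,y₂ ∈ ℝ^k, with ρ ∈ (0,1), R > 0; σ : F → ℝ^{k×k} is measurable with σ(x) invertible for every x ∈ F; ℓ : F → ℝ^k is measurable; and ε₀ is an ℝ^k-valued random variable whose law has a density g with respect to Lebesgue measure which is bounded away from 0 on compact sets (for every compact C ⊆ ℝ^k there is κ > 0 with g ≥ κ on C). For x ∈ F and y₁,y₂ ∈ ℝ^k let ν(x,y₁,y₂) be the uniform probability measure on the closed unit ball centered at (μ(y₁,x) + μ(y₂,x))/2 + ℓ(x). Then there exists a function η : F → (0,1] such that for every x ∈ F, every y₁,y₂ ∈ ℝ^k with 0 < |y₁−y₂| ≤ 2R/(1−ρ), every Borel set A ⊆ ℝ^k and i = 1,2: ℙ(μ(y_i,x) + σ(x)ε₀ + ℓ(x) ∈ A) ≥ η(x)·ν(x,y₁,y₂)(A). -/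
open MeasureTheory

/-- The uniform probability measure on the closed ball of radius `r` around `c`. -/
noncomputable def uniformBall {k : ℕ} (c : EuclideanSpace ℝ (Fin k)) (r : ℝ) :
    Measure (EuclideanSpace ℝ (Fin k)) :=
  (volume (Metric.closedBall c r))⁻¹ • volume.restrict (Metric.closedBall c r)

/-- Matrix–vector multiplication on Euclidean space. -/
noncomputable def matVec {k : ℕ} (M : Matrix (Fin k) (Fin k) ℝ)
    (v : EuclideanSpace ℝ (Fin k)) : EuclideanSpace ℝ (Fin k) :=
  (EuclideanSpace.equiv (Fin k) ℝ).symm (M.mulVec (EuclideanSpace.equiv (Fin k) ℝ v))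

/-!
For fixed `x`, the law of `b + σ(x) ε₀ + ℓ(x)` has density `|det σ(x)|⁻¹ g(σ(x)⁻¹(· - b - ℓ(x)))`.
When `‖y₁ - y₂‖ ≤ 2R/(1-ρ)`, both points `μ(yᵢ, x)` lie within `r = (2ρR/(1-ρ) + R)/2` of their
midpoint, so for both choices of `b` the unit ball around the shifted midpoint pulls back into
the single compact set `σ(x)⁻¹(closedBall 0 (1 + r))`, on which `g ≥ κ(x)`. Each law therefore
dominates `κ(x) |det σ(x)|⁻¹` times Lebesgue measure on that ball, which is
`κ(x) |det σ(x)|⁻¹ vol(B₁)` times the uniform law on it.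
-/

section HaarAffine

variable {E : Type*} [NormedAddCommGroup E] [NormedSpace ℝ E] [MeasurableSpace E] [BorelSpace E]
  [FiniteDimensional ℝ E] (μ : Measure E) [μ.IsAddHaarMeasure]

theorem addHaar_preimage_affine {T : E →ₗ[ℝ] E} (hT : T.det ≠ 0) (v : E) (s : Set E) :
    μ ((fun u => v + T u) ⁻¹' s) = ENNReal.ofReal |T.det⁻¹| * μ s := by
  rw [show (fun u => v + T u) ⁻¹' s = T ⁻¹' ((v + ·) ⁻¹' s) from rfl,
    Measure.addHaar_preimage_linearMap μ hT, measure_preimage_add]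

theorem mul_addHaar_inter_le_setLIntegral_preimage_affine {T : E →ₗ[ℝ] E} (hT : T.det ≠ 0)
    (v : E) {g : E → ENNReal} (hg : Measurable g) {κ : ENNReal} {S : Set E}
    (hκ : ∀ u, v + T u ∈ S → κ ≤ g u) (A : Set E) :
    κ * ENNReal.ofReal |T.det⁻¹| * μ (A ∩ S) ≤ ∫⁻ u in (fun u => v + T u) ⁻¹' A, g u ∂μ :=
  calc κ * ENNReal.ofReal |T.det⁻¹| * μ (A ∩ S)
      = ∫⁻ _ in (fun u => v + T u) ⁻¹' (A ∩ S), κ ∂μ := by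
        rw [setLIntegral_const, addHaar_preimage_affine μ hT, mul_assoc]
    _ ≤ ∫⁻ u in (fun u => v + T u) ⁻¹' (A ∩ S), g u ∂μ :=
        setLIntegral_mono hg fun u hu => hκ u hu.2
    _ ≤ ∫⁻ u in (fun u => v + T u) ⁻¹' A, g u ∂μ := lintegral_mono_set fun _ hu => hu.1

theorem mul_addHaar_inter_le_measure_affine_mem {Ω : Type*} [MeasurableSpace Ω] {P : Measure Ω}
    {ε : Ω → E} (hε : Measurable ε) {g : E → ENNReal} (hg : Measurable g)
    (hlaw : P.map ε = μ.withDensity g) {T : E →ₗ[ℝ] E} (hT : T.det ≠ 0) (v : E) {κ : ENNReal}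
    {S : Set E} (hκ : ∀ u, v + T u ∈ S → κ ≤ g u) {A : Set E} (hA : MeasurableSet A) :
    κ * ENNReal.ofReal |T.det⁻¹| * μ (A ∩ S) ≤ P {ω | v + T (ε ω) ∈ A} := by
  have hpre : MeasurableSet ((fun u => v + T u) ⁻¹' A) :=
    ((measurable_const_add v).comp T.continuous_of_finiteDimensional.measurable) hA
  calc _ ≤ _ := mul_addHaar_inter_le_setLIntegral_preimage_affine μ hT v hg hκ A
    _ = P.map ε ((fun u => v + T u) ⁻¹' A) := by rw [hlaw, withDensity_apply _ hpre]
    _ = _ := Measure.map_apply hε hpre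

end HaarAffine

theorem norm_sub_half_smul_add {E : Type*} [NormedAddCommGroup E] [NormedSpace ℝ E] (a b : E) :
    ‖a - ((1 : ℝ) / 2) • (a + b)‖ = ‖a - b‖ / 2 := by
  rw [show a - ((1 : ℝ) / 2) • (a + b) = ((1 : ℝ) / 2) • (a - b) by module, norm_smul]
  norm_num
  ring

theorem det_toEuclideanLin {n : Type*} [Fintype n] [DecidableEq n] (M : Matrix n n ℝ) :
    (Matrix.toEuclideanLin M).det = M.det := by
  rw [Matrix.toEuclideanLin_eq_toLin_orthonormal, LinearMap.det_toLin]

-- `matVec M` is definitionally `Matrix.toEuclideanLin M`; the proofs below use this freely.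
section MatVec

variable {k : ℕ}

theorem continuous_matVec (M : Matrix (Fin k) (Fin k) ℝ) : Continuous (matVec M) :=
  (Matrix.toEuclideanLin M).continuous_of_finiteDimensional

theorem matVec_nonsing_inv_matVec {M : Matrix (Fin k) (Fin k) ℝ} (hM : IsUnit M)
    (v : EuclideanSpace ℝ (Fin k)) : matVec M⁻¹ (matVec M v) = v := by
  change WithLp.toLp 2 (M⁻¹.mulVec (M.mulVec v.ofLp)) = v
  rw [Matrix.mulVec_mulVec, Matrix.nonsing_inv_mul M ((Matrix.isUnit_iff_isUnit_det M).mp hM),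
    Matrix.one_mulVec]

theorem mem_image_matVec_inv_of_add_matVec_mem_closedBall {M : Matrix (Fin k) (Fin k) ℝ}
    (hM : IsUnit M) {v c u : EuclideanSpace ℝ (Fin k)} {r : ℝ}
    (h : v + matVec M u ∈ Metric.closedBall c r) :
    u ∈ matVec M⁻¹ '' Metric.closedBall 0 (r + ‖v - c‖) := by
  refine ⟨matVec M u, ?_, matVec_nonsing_inv_matVec hM u⟩
  rw [mem_closedBall_zero_iff, ← dist_eq_norm]
  calc ‖matVec M u‖ = ‖(v + matVec M u - c) - (v - c)‖ := by congr 1; abel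
    _ ≤ r + ‖v - c‖ := (norm_sub_le _ _).trans (add_le_add_left (mem_closedBall_iff_norm.mp h) _)

end MatVec

theorem volume_closedBall_mul_uniformBall {k : ℕ} (c : EuclideanSpace ℝ (Fin k)) {r : ℝ}
    (hr : 0 < r) {A : Set (EuclideanSpace ℝ (Fin k))} (hA : MeasurableSet A) :
    volume (Metric.closedBall c r) * uniformBall c r A = volume (A ∩ Metric.closedBall c r) := by
  rw [uniformBall, Measure.smul_apply, Measure.restrict_apply hA, smul_eq_mul, ← mul_assoc,
    ENNReal.mul_inv_cancel (Metric.measure_closedBall_pos _ _ hr).ne'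
      measure_closedBall_lt_top.ne, one_mul]

theorem ofReal_mul_volume_mul_uniformBall_le {k : ℕ} {Ω : Type*} [MeasurableSpace Ω]
    {P : Measure Ω} {ε : Ω → EuclideanSpace ℝ (Fin k)} (hε : Measurable ε)
    {g : EuclideanSpace ℝ (Fin k) → ℝ} (hg : Measurable g)
    (hlaw : P.map ε = volume.withDensity fun u => ENNReal.ofReal (g u))
    {M : Matrix (Fin k) (Fin k) ℝ} (hM : IsUnit M) {r κ : ℝ}
    (hκ : ∀ u ∈ matVec M⁻¹ '' Metric.closedBall 0 (1 + r), κ ≤ g u)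
    {b c ℓ : EuclideanSpace ℝ (Fin k)} (hbc : ‖b - c‖ ≤ r)
    {A : Set (EuclideanSpace ℝ (Fin k))} (hA : MeasurableSet A) :
    ENNReal.ofReal (κ * |M.det⁻¹|) * volume (Metric.closedBall (0 : EuclideanSpace ℝ (Fin k)) 1)
        * uniformBall (c + ℓ) 1 A
      ≤ P {ω | b + matVec M (ε ω) + ℓ ∈ A} := by
  have hdet : (Matrix.toEuclideanLin M).det ≠ 0 := by
    rw [det_toEuclideanLin]
    exact ((Matrix.isUnit_iff_isUnit_det M).mp hM).ne_zero
  have hκ' : ∀ u, (b + ℓ) + Matrix.toEuclideanLin M u ∈ Metric.closedBall (c + ℓ) 1 →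
      ENNReal.ofReal κ ≤ ENNReal.ofReal (g u) := by
    intro u hu
    refine ENNReal.ofReal_le_ofReal (hκ u ?_)
    have hu' := mem_image_matVec_inv_of_add_matVec_mem_closedBall hM hu
    rw [add_sub_add_right_eq_sub] at hu'
    exact Set.image_mono (Metric.closedBall_subset_closedBall (by linarith)) hu'
  calc _ = ENNReal.ofReal κ * ENNReal.ofReal |(Matrix.toEuclideanLin M).det⁻¹|
        * volume (A ∩ Metric.closedBall (c + ℓ) 1) := by
        rw [ENNReal.ofReal_mul' (abs_nonneg _), mul_assoc,
          ← Measure.addHaar_closedBall_center volume (c + ℓ) 1,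
          volume_closedBall_mul_uniformBall _ one_pos hA, det_toEuclideanLin, mul_assoc]
    _ ≤ P {ω | (b + ℓ) + Matrix.toEuclideanLin M (ε ω) ∈ A} :=
        mul_addHaar_inter_le_measure_affine_mem volume hε hg.ennreal_ofReal hlaw hdet _ hκ' hA
    _ = P {ω | b + matVec M (ε ω) + ℓ ∈ A} := by simp_rw [add_right_comm b _ ℓ]; rfl

theorem stmt_8_general {k : ℕ} {F : Type*}
    {Ω : Type*} [MeasurableSpace Ω] (P : Measure Ω)
    (μ : EuclideanSpace ℝ (Fin k) → F → EuclideanSpace ℝ (Fin k))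
    (ρ R : ℝ) (hρ : ρ ∈ Set.Ioo (0:ℝ) 1)
    (hμ : ∀ (x : F) (y₁ y₂ : EuclideanSpace ℝ (Fin k)),
      ‖μ y₁ x - μ y₂ x‖ ≤ ρ * ‖y₁ - y₂‖ + R)
    (σ : F → Matrix (Fin k) (Fin k) ℝ)
    (hσinv : ∀ x, IsUnit (σ x))
    (ℓ : F → EuclideanSpace ℝ (Fin k))
    (ε : Ω → EuclideanSpace ℝ (Fin k)) (hε : Measurable ε)
    (g : EuclideanSpace ℝ (Fin k) → ℝ) (hgmeas : Measurable g)
    (hlaw : Measure.map ε P = volume.withDensity fun u => ENNReal.ofReal (g u))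
    (hgpos : ∀ C : Set (EuclideanSpace ℝ (Fin k)), IsCompact C →
      ∃ κ > (0:ℝ), ∀ u ∈ C, κ ≤ g u) :
    ∃ η : F → ℝ, (∀ x, η x ∈ Set.Ioc (0:ℝ) 1) ∧
      ∀ (x : F) (y₁ y₂ : EuclideanSpace ℝ (Fin k)),
        0 < ‖y₁ - y₂‖ → ‖y₁ - y₂‖ ≤ 2 * R / (1 - ρ) →
        ∀ A : Set (EuclideanSpace ℝ (Fin k)), MeasurableSet A →
          ENNReal.ofReal (η x)
              * uniformBall (((1:ℝ)/2) • (μ y₁ x + μ y₂ x) + ℓ x) 1 A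
            ≤ P {ω | μ y₁ x + matVec (σ x) (ε ω) + ℓ x ∈ A} ∧
          ENNReal.ofReal (η x)
              * uniformBall (((1:ℝ)/2) • (μ y₁ x + μ y₂ x) + ℓ x) 1 A
            ≤ P {ω | μ y₂ x + matVec (σ x) (ε ω) + ℓ x ∈ A} := by
  set r := (ρ * (2 * R / (1 - ρ)) + R) / 2
  choose κ hκpos hκ using fun x =>
    hgpos _ ((isCompact_closedBall 0 (1 + r)).image (continuous_matVec (σ x)⁻¹))
  set vb := (volume (Metric.closedBall (0 : EuclideanSpace ℝ (Fin k)) 1)).toReal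
  have hvb : 0 < vb := ENNReal.toReal_pos (Metric.measure_closedBall_pos _ _ one_pos).ne'
    measure_closedBall_lt_top.ne
  have hvb_eq : ENNReal.ofReal vb = volume (Metric.closedBall (0 : EuclideanSpace ℝ (Fin k)) 1) :=
    ENNReal.ofReal_toReal measure_closedBall_lt_top.ne
  have hdet x : 0 < |(σ x).det⁻¹| :=
    abs_pos.2 (inv_ne_zero ((Matrix.isUnit_iff_isUnit_det _).mp (hσinv x)).ne_zero)
  refine ⟨fun x => min 1 (κ x * |(σ x).det⁻¹| * vb), fun x =>
    ⟨lt_min one_pos (mul_pos (mul_pos (hκpos x) (hdet x)) hvb), min_le_left _ _⟩, ?_⟩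
  intro x y₁ y₂ _ hy A hA
  have hη : ENNReal.ofReal (min 1 (κ x * |(σ x).det⁻¹| * vb))
      ≤ ENNReal.ofReal (κ x * |(σ x).det⁻¹|)
        * volume (Metric.closedBall (0 : EuclideanSpace ℝ (Fin k)) 1) := by
    rw [← hvb_eq, ← ENNReal.ofReal_mul (mul_pos (hκpos x) (hdet x)).le]
    exact ENNReal.ofReal_le_ofReal (min_le_right _ _)
  have hhalf : ‖μ y₁ x - μ y₂ x‖ / 2 ≤ r := by
    show _ / 2 ≤ (_ + R) / 2
    gcongr
    exact (hμ x y₁ y₂).trans (add_le_add_left (mul_le_mul_of_nonneg_left hy hρ.1.le) R)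
  have key b (hb : ‖b - ((1:ℝ)/2) • (μ y₁ x + μ y₂ x)‖ ≤ r) :=
    (mul_le_mul_left hη _).trans (ofReal_mul_volume_mul_uniformBall_le (ℓ := ℓ x) hε hgmeas
      hlaw (hσinv x) (hκ x) hb hA)
  exact ⟨key _ (by rwa [norm_sub_half_smul_add]),
    key _ (by rwa [add_comm (μ y₁ x), norm_sub_half_smul_add, norm_sub_rev])⟩

theorem stmt_8 {k : ℕ} (hk : 1 ≤ k) {F : Type*} [MeasurableSpace F]
    {Ω : Type*} [MeasurableSpace Ω] (P : Measure Ω) [IsProbabilityMeasure P]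
    (μ : EuclideanSpace ℝ (Fin k) → F → EuclideanSpace ℝ (Fin k))
    (hμmeas : Measurable fun p : EuclideanSpace ℝ (Fin k) × F => μ p.1 p.2)
    (ρ R : ℝ) (hρ : ρ ∈ Set.Ioo (0:ℝ) 1) (hR : 0 < R)
    (hμ : ∀ (x : F) (y₁ y₂ : EuclideanSpace ℝ (Fin k)),
      ‖μ y₁ x - μ y₂ x‖ ≤ ρ * ‖y₁ - y₂‖ + R)
    (σ : F → Matrix (Fin k) (Fin k) ℝ) (hσmeas : ∀ i j, Measurable fun x => σ x i j)
    (hσinv : ∀ x, IsUnit (σ x))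
    (ℓ : F → EuclideanSpace ℝ (Fin k)) (hℓ : Measurable ℓ)
    (ε : Ω → EuclideanSpace ℝ (Fin k)) (hε : Measurable ε)
    (g : EuclideanSpace ℝ (Fin k) → ℝ) (hgmeas : Measurable g) (hg0 : ∀ u, 0 ≤ g u)
    (hlaw : Measure.map ε P = volume.withDensity fun u => ENNReal.ofReal (g u))
    (hgpos : ∀ C : Set (EuclideanSpace ℝ (Fin k)), IsCompact C →
      ∃ κ > (0:ℝ), ∀ u ∈ C, κ ≤ g u) :
    ∃ η : F → ℝ, (∀ x, η x ∈ Set.Ioc (0:ℝ) 1) ∧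
      ∀ (x : F) (y₁ y₂ : EuclideanSpace ℝ (Fin k)),
        0 < ‖y₁ - y₂‖ → ‖y₁ - y₂‖ ≤ 2 * R / (1 - ρ) →
        ∀ A : Set (EuclideanSpace ℝ (Fin k)), MeasurableSet A →
          ENNReal.ofReal (η x)
              * uniformBall (((1:ℝ)/2) • (μ y₁ x + μ y₂ x) + ℓ x) 1 A
            ≤ P {ω | μ y₁ x + matVec (σ x) (ε ω) + ℓ x ∈ A} ∧
          ENNReal.ofReal (η x)
              * uniformBall (((1:ℝ)/2) • (μ y₁ x + μ y₂ x) + ℓ x) 1 A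
            ≤ P {ω | μ y₂ x + matVec (σ x) (ε ω) + ℓ x ∈ A} :=
  stmt_8_general P μ ρ R hρ hμ σ hσinv ℓ ε hε g hgmeas hlaw hgpos
end

section
/- Let a > 0, J ≥ 0, 0 < h < 1/(2a), m ≥ 1, F a set, and H : ℝ^m × F → ℝ^m with |H(y,x)| ≤ J for all y ∈ ℝ^m, x ∈ F. Let ε₀ be a standard Gaussian random vector on ℝ^m and define the SGLD one-step map f(y,x,z) = y − 2ah·y − h·H(y,x) + √(2h)·z. For x ∈ F and y₁,y₂ ∈ ℝ^m let ν(x,y₁,y₂) be the uniform probability measure on the closed ball of radius √(2h) centered at (1−2ah)(y₁+y₂)/2 − h(H(y₁,x)+H(y₂,x))/2. Then: (i) for all y₁,y₂ ∈ ℝ^m, x ∈ F, z ∈ ℝ^m, |f(y₁,x,z) − f(y₂,x,z)| ≤ (1−2ah)·|y₁−y₂| + 2hJ; and (ii) there exists a constant η ∈ (0,1], independent of x, y₁, y₂, such that for all x ∈ F, all y₁,y₂ ∈ ℝ^m with |y₁−y₂| ≤ 2J/a, every Borel set A ⊆ ℝ^m and i = 1,2: ℙ(f(y_i,x,ε₀)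 ∈ A) ≥ η·ν(x,y₁,y₂)(A). -/
open MeasureTheory

set_option maxHeartbeats 1000000 in
theorem stmt_9 {m : ℕ} (hm : 1 ≤ m) {F : Type*} [Nonempty F]
    {Ω : Type*} [MeasurableSpace Ω] (P : Measure Ω) [IsProbabilityMeasure P]
    (a J h : ℝ) (ha : 0 < a) (hJ : 0 ≤ J) (hh : 0 < h) (hh2 : h < 1 / (2 * a))
    (H : EuclideanSpace ℝ (Fin m) → F → EuclideanSpace ℝ (Fin m))
    (hH : ∀ y x, ‖H y x‖ ≤ J)
    (ε : Ω → EuclideanSpace ℝ (Fin m)) (hε : Measurable ε)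
    (hlaw : Measure.map ε P = volume.withDensity fun u =>
      ENNReal.ofReal ((2 * Real.pi) ^ (-(m : ℝ) / 2) * Real.exp (-‖u‖ ^ 2 / 2)))
    (f : EuclideanSpace ℝ (Fin m) → F → EuclideanSpace ℝ (Fin m) →
      EuclideanSpace ℝ (Fin m))
    (hf : ∀ y x z, f y x z = y - (2 * a * h) • y - h • H y x + Real.sqrt (2 * h) • z) :
    (∀ y₁ y₂ x z, ‖f y₁ x z - f y₂ x z‖ ≤ (1 - 2 * a * h) * ‖y₁ - y₂‖ + 2 * h * J) ∧
    ∃ η : ℝ, η ∈ Set.Ioc (0:ℝ) 1 ∧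
      ∀ (x : F) (y₁ y₂ : EuclideanSpace ℝ (Fin m)), ‖y₁ - y₂‖ ≤ 2 * J / a →
        ∀ A : Set (EuclideanSpace ℝ (Fin m)), MeasurableSet A →
          ENNReal.ofReal η
              * uniformBall ((1 - 2 * a * h) • (((1:ℝ)/2) • (y₁ + y₂))
                  - (h / 2) • (H y₁ x + H y₂ x)) (Real.sqrt (2 * h)) A
            ≤ P {ω | f y₁ x (ε ω) ∈ A} ∧
          ENNReal.ofReal η
              * uniformBall ((1 - 2 * a * h) • (((1:ℝ)/2) • (y₁ + y₂))
                  - (h / 2) • (H y₁ x + H y₂ x)) (Real.sqrt (2 * h)) A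
            ≤ P {ω | f y₂ x (ε ω) ∈ A} := by
  have h2ah : 2 * a * h < 1 := by
    rw [lt_div_iff₀ (by positivity)] at hh2; nlinarith
  have hρ : 0 ≤ 1 - 2 * a * h := by linarith
  set s : ℝ := Real.sqrt (2 * h) with hs_def
  have hs : 0 < s := Real.sqrt_pos.2 (by linarith)
  constructor
  · -- part (i)
    intro y₁ y₂ x z
    have key : f y₁ x z - f y₂ x z
        = (1 - 2 * a * h) • (y₁ - y₂) + (-h) • (H y₁ x - H y₂ x) := by
      rw [hf, hf]; module
    have hHd : ‖H y₁ x - H y₂ x‖ ≤ 2 * J := by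
      calc ‖H y₁ x - H y₂ x‖ ≤ ‖H y₁ x‖ + ‖H y₂ x‖ := norm_sub_le _ _
        _ ≤ 2 * J := by have := hH y₁ x; have := hH y₂ x; linarith
    calc ‖f y₁ x z - f y₂ x z‖
        ≤ ‖(1 - 2 * a * h) • (y₁ - y₂)‖ + ‖(-h) • (H y₁ x - H y₂ x)‖ := by
          rw [key]; exact norm_add_le _ _
      _ = (1 - 2 * a * h) * ‖y₁ - y₂‖ + h * ‖H y₁ x - H y₂ x‖ := by
          rw [norm_smul, norm_smul, Real.norm_eq_abs, Real.norm_eq_abs,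
            abs_of_nonneg hρ, abs_neg, abs_of_pos hh]
      _ ≤ (1 - 2 * a * h) * ‖y₁ - y₂‖ + 2 * h * J := by nlinarith
  · -- part (ii)
    set R : ℝ := (s + J / a) / s with hR_def
    set glow : ℝ := (2 * Real.pi) ^ (-(m : ℝ) / 2) * Real.exp (-R ^ 2 / 2) with hglow_def
    have hglow : 0 < glow := by positivity
    set V : ENNReal := volume (Metric.closedBall (0 : EuclideanSpace ℝ (Fin m)) s) with hV_def
    have hV0 : V ≠ 0 := (Metric.measure_closedBall_pos volume (0 : EuclideanSpace ℝ (Fin m)) hs).ne'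
    have hVtop : V ≠ ⊤ := measure_closedBall_lt_top.ne
    set η : ℝ := min 1 (glow * (s ^ m)⁻¹ * V.toReal) with hη_def
    have hη0 : 0 < η := by
      refine lt_min one_pos ?_
      have := ENNReal.toReal_pos hV0 hVtop
      positivity
    have hkeyη : ENNReal.ofReal η ≤ ENNReal.ofReal glow * ENNReal.ofReal ((s ^ m)⁻¹) * V := by
      calc ENNReal.ofReal η ≤ ENNReal.ofReal (glow * (s ^ m)⁻¹ * V.toReal) :=
            ENNReal.ofReal_le_ofReal (min_le_right _ _)
        _ = ENNReal.ofReal glow * ENNReal.ofReal ((s ^ m)⁻¹) * V := by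
            rw [ENNReal.ofReal_mul (by positivity), ENNReal.ofReal_mul hglow.le,
              ENNReal.ofReal_toReal hVtop]
    refine ⟨η, ⟨hη0, min_le_left _ _⟩, ?_⟩
    intro x y₁ y₂ hy A hA
    set c : EuclideanSpace ℝ (Fin m) := (1 - 2 * a * h) • (((1:ℝ)/2) • (y₁ + y₂)) - (h / 2) • (H y₁ x + H y₂ x)
      with hc_def
    set B : Set (EuclideanSpace ℝ (Fin m)) := Metric.closedBall c s with hB_def
    have hVB : volume B = V := by
      rw [hB_def, hV_def, Measure.addHaar_closedBall_center]
    have hunif : uniformBall c s A = V⁻¹ * volume (A ∩ B) := by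
      rw [uniformBall, Measure.smul_apply, Measure.restrict_apply hA, smul_eq_mul, hVB]
    -- main claim, for a single point y with center close to c
    have Hkey : ∀ y : EuclideanSpace ℝ (Fin m), ‖c - ((1 - 2 * a * h) • y - h • H y x)‖ ≤ J / a →
        ENNReal.ofReal η * uniformBall c s A ≤ P {ω | f y x (ε ω) ∈ A} := by
      intro y hyc
      set ci : EuclideanSpace ℝ (Fin m) := (1 - 2 * a * h) • y - h • H y x with hci_def
      have hfeq : ∀ z : EuclideanSpace ℝ (Fin m), f y x z = ci + s • z := by
        intro z; rw [hf, hci_def, hs_def]; module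
      set T : EuclideanSpace ℝ (Fin m) → EuclideanSpace ℝ (Fin m) := fun u => ci + s • u with hT_def
      have hTmeas : Measurable T := measurable_const.add (measurable_id.const_smul s)
      set S : Set (EuclideanSpace ℝ (Fin m)) := T ⁻¹' A with hS_def
      have hS : MeasurableSet S := hTmeas hA
      have hB₀ : MeasurableSet (T ⁻¹' B) := hTmeas measurableSet_closedBall
      have hset : {ω | f y x (ε ω) ∈ A} = ε ⁻¹' S := by
        ext ω; simp [hS_def, hfeq, hT_def]
      -- norm bound on the preimage of the ball
      have hnorm : ∀ u ∈ T ⁻¹' B, ‖u‖ ≤ R := by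
        intro u hu
        have h1 : ‖T u - c‖ ≤ s := by
          simpa [hB_def, Metric.mem_closedBall, dist_eq_norm] using hu
        have h2 : s • u = (T u - c) + (c - ci) := by simp only [hT_def]; abel
        have h3 : s * ‖u‖ ≤ s + J / a := by
          have : ‖s • u‖ ≤ ‖T u - c‖ + ‖c - ci‖ := by rw [h2]; exact norm_add_le _ _
          rw [norm_smul, Real.norm_eq_abs, abs_of_pos hs] at this
          linarith
        rw [hR_def, le_div_iff₀ hs]
        nlinarith [norm_nonneg u]
      -- pointwise density lower bound
      have hpt : ∀ u ∈ S ∩ T ⁻¹' B,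
          ENNReal.ofReal glow ≤
            ENNReal.ofReal ((2 * Real.pi) ^ (-(m : ℝ) / 2) * Real.exp (-‖u‖ ^ 2 / 2)) := by
        intro u hu
        refine ENNReal.ofReal_le_ofReal ?_
        have hu2 : ‖u‖ ^ 2 ≤ R ^ 2 :=
          pow_le_pow_left₀ (norm_nonneg u) (hnorm u hu.2) 2
        have : Real.exp (-R ^ 2 / 2) ≤ Real.exp (-‖u‖ ^ 2 / 2) :=
          Real.exp_le_exp.2 (by linarith)
        rw [hglow_def]
        exact mul_le_mul_of_nonneg_left this (by positivity)
      -- volume of preimage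
      have hvol : volume (S ∩ T ⁻¹' B) = ENNReal.ofReal ((s ^ m)⁻¹) * volume (A ∩ B) := by
        have hcomp : S ∩ T ⁻¹' B = (fun u : EuclideanSpace ℝ (Fin m) => s • u) ⁻¹' ((fun v : EuclideanSpace ℝ (Fin m) => ci + v) ⁻¹' (A ∩ B)) := by
          rw [hS_def]; rfl
        rw [hcomp, Measure.addHaar_preimage_smul volume hs.ne' _, measure_preimage_add,
          finrank_euclideanSpace_fin, abs_of_pos (by positivity : (0:ℝ) < (s ^ m)⁻¹)]
      -- main chain
      have hchain : ENNReal.ofReal glow * (ENNReal.ofReal ((s ^ m)⁻¹) * volume (A ∩ B))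
          ≤ P {ω | f y x (ε ω) ∈ A} := by
        calc ENNReal.ofReal glow * (ENNReal.ofReal ((s ^ m)⁻¹) * volume (A ∩ B))
            = ENNReal.ofReal glow * volume (S ∩ T ⁻¹' B) := by rw [hvol]
          _ = ∫⁻ _ in S ∩ T ⁻¹' B, ENNReal.ofReal glow := (setLIntegral_const _ _).symm
          _ ≤ ∫⁻ u in S ∩ T ⁻¹' B,
                ENNReal.ofReal ((2 * Real.pi) ^ (-(m : ℝ) / 2) * Real.exp (-‖u‖ ^ 2 / 2)) :=
              setLIntegral_mono' (hS.inter hB₀) hpt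
          _ ≤ ∫⁻ u in S,
                ENNReal.ofReal ((2 * Real.pi) ^ (-(m : ℝ) / 2) * Real.exp (-‖u‖ ^ 2 / 2)) :=
              lintegral_mono_set Set.inter_subset_left
          _ = (volume.withDensity fun u =>
                ENNReal.ofReal ((2 * Real.pi) ^ (-(m : ℝ) / 2) * Real.exp (-‖u‖ ^ 2 / 2))) S :=
              (withDensity_apply _ hS).symm
          _ = Measure.map ε P S := by rw [hlaw]
          _ = P (ε ⁻¹' S) := Measure.map_apply hε hS
          _ = P {ω | f y x (ε ω) ∈ A} := by rw [hset]
      refine le_trans ?_ hchain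
      rw [hunif]
      calc ENNReal.ofReal η * (V⁻¹ * volume (A ∩ B))
          = ENNReal.ofReal η * V⁻¹ * volume (A ∩ B) := by rw [mul_assoc]
        _ ≤ ENNReal.ofReal glow * ENNReal.ofReal ((s ^ m)⁻¹) * V * V⁻¹ * volume (A ∩ B) := by
            exact mul_le_mul_left (mul_le_mul_left hkeyη _) _
        _ = ENNReal.ofReal glow * (ENNReal.ofReal ((s ^ m)⁻¹) * volume (A ∩ B)) := by
            rw [mul_assoc _ V V⁻¹, ENNReal.mul_inv_cancel hV0 hVtop, mul_one, mul_assoc]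
    have hsum : ‖H y₁ x - H y₂ x‖ ≤ 2 * J := by
      calc ‖H y₁ x - H y₂ x‖ ≤ ‖H y₁ x‖ + ‖H y₂ x‖ := norm_sub_le _ _
        _ ≤ 2 * J := by have := hH y₁ x; have := hH y₂ x; linarith
    have hsum' : ‖H y₂ x - H y₁ x‖ ≤ 2 * J := by rwa [norm_sub_rev]
    have hya : ‖y₁ - y₂‖ * a ≤ 2 * J := by rwa [le_div_iff₀ ha] at hy
    have harith : ∀ t d : ℝ, 0 ≤ t → t ≤ 2 * J → 0 ≤ d → d * a ≤ 2 * J →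
        (1 - 2 * a * h) * ((1/2) * d) + (h/2) * t ≤ J / a := by
      intro t d ht ht2 hd hd2
      rw [le_div_iff₀ ha]
      nlinarith [mul_nonneg hρ (by linarith : (0:ℝ) ≤ 2 * J - d * a),
        mul_nonneg (mul_nonneg ha.le hh.le) (by linarith : (0:ℝ) ≤ 2 * J - t), mul_nonneg (mul_nonneg ha.le hh.le) hJ]
    have hn1 : ‖c - ((1 - 2 * a * h) • y₁ - h • H y₁ x)‖ ≤ J / a := by
      have hceq : c - ((1 - 2 * a * h) • y₁ - h • H y₁ x)
          = (1 - 2 * a * h) • (((1:ℝ)/2) • (y₂ - y₁)) + (h/2) • (H y₁ x - H y₂ x) := by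
        rw [hc_def]; module
      rw [hceq]
      calc ‖(1 - 2 * a * h) • (((1:ℝ)/2) • (y₂ - y₁)) + (h/2) • (H y₁ x - H y₂ x)‖
          ≤ ‖(1 - 2 * a * h) • (((1:ℝ)/2) • (y₂ - y₁))‖ + ‖(h/2) • (H y₁ x - H y₂ x)‖ :=
            norm_add_le _ _
        _ = (1 - 2 * a * h) * ((1/2) * ‖y₂ - y₁‖) + (h/2) * ‖H y₁ x - H y₂ x‖ := by
            rw [norm_smul, norm_smul, norm_smul, Real.norm_eq_abs, Real.norm_eq_abs,
              Real.norm_eq_abs, abs_of_nonneg hρ, abs_of_pos (by norm_num : (0:ℝ) < (1:ℝ)/2),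
              abs_of_pos (by positivity : (0:ℝ) < h/2)]
        _ ≤ J / a := harith _ _ (norm_nonneg _) hsum (norm_nonneg _)
            (by rw [norm_sub_rev]; exact hya)
    have hn2 : ‖c - ((1 - 2 * a * h) • y₂ - h • H y₂ x)‖ ≤ J / a := by
      have hceq : c - ((1 - 2 * a * h) • y₂ - h • H y₂ x)
          = (1 - 2 * a * h) • (((1:ℝ)/2) • (y₁ - y₂)) + (h/2) • (H y₂ x - H y₁ x) := by
        rw [hc_def]; module
      rw [hceq]
      calc ‖(1 - 2 * a * h) • (((1:ℝ)/2) • (y₁ - y₂)) + (h/2) • (H y₂ x - H y₁ x)‖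
          ≤ ‖(1 - 2 * a * h) • (((1:ℝ)/2) • (y₁ - y₂))‖ + ‖(h/2) • (H y₂ x - H y₁ x)‖ :=
            norm_add_le _ _
        _ = (1 - 2 * a * h) * ((1/2) * ‖y₁ - y₂‖) + (h/2) * ‖H y₂ x - H y₁ x‖ := by
            rw [norm_smul, norm_smul, norm_smul, Real.norm_eq_abs, Real.norm_eq_abs,
              Real.norm_eq_abs, abs_of_nonneg hρ, abs_of_pos (by norm_num : (0:ℝ) < (1:ℝ)/2),
              abs_of_pos (by positivity : (0:ℝ) < h/2)]
        _ ≤ J / a := harith _ _ (norm_nonneg _) hsum' (norm_nonneg _) hya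
    exact ⟨Hkey y₁ hn1, Hkey y₂ hn2⟩
end

section
/- Let m ≥ 2, let −∞ = r₀ < r₁ < ⋯ < r_{m−1} < r_m = ∞ be thresholds, let a₁,…,a_m, b₁,…,b_m ∈ ℝ, and define the regimes ℛ_i = (r_{i−1}, r_i] for 1 ≤ i ≤ m−1 and ℛ_m = (r_{m−1}, ∞), and the multiple-threshold AR(1) drift μ(y) = Σ_{i=1}^m (a_i·y + b_i)·1_{y ∈ ℛ_i}. Suppose max(|a₁|, |a_m|) < 1. Then, with ρ = max(|a₁|, |a_m|), a = max_{1≤i≤m} |a_i|, b = max_{1≤i≤m} |b_i|, r = max_{1≤i≤m−1} |r_i|, and R = 2ar + 2b, one has |μ(y) − μ(y')| ≤ ρ·|y−y'| + R for all y, y' ∈ ℝ. -/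
private lemma key1 {ρ c u w : ℝ} (h : |c| ≤ ρ) (hu : |u| ≤ w) : |c * u| ≤ ρ * w := by
  rw [abs_mul]
  exact mul_le_mul h hu (abs_nonneg u) ((abs_nonneg c).trans h)

private lemma key2 {ρ c1 c2 u v w : ℝ} (h1 : |c1| ≤ ρ) (h2 : |c2| ≤ ρ)
    (hu : u ≤ 0) (hv : 0 ≤ v) (hw : v - u ≤ w) : |c1 * u - c2 * v| ≤ ρ * w := by
  have hρ : 0 ≤ ρ := (abs_nonneg c1).trans h1
  calc |c1 * u - c2 * v| ≤ |c1 * u| + |c2 * v| := abs_sub _ _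
    _ ≤ ρ * (-u) + ρ * v := by
        have e1 : |c1 * u| = |c1| * (-u) := by rw [abs_mul, abs_of_nonpos hu]
        have e2 : |c2 * v| = |c2| * v := by rw [abs_mul, abs_of_nonneg hv]
        rw [e1, e2]
        have := abs_nonneg c1
        have := abs_nonneg c2
        nlinarith
    _ = ρ * (v - u) := by ring
    _ ≤ ρ * w := mul_le_mul_of_nonneg_left hw hρ

private lemma helper {ρ A B Rr c1 d1 c2 d2 s1 s2 y1 y2 : ℝ}
    (ha1 : |c1| ≤ A) (ha2 : |c2| ≤ A) (hb1 : |d1| ≤ B) (hb2 : |d2| ≤ B)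
    (hs1 : |s1| ≤ Rr) (hs2 : |s2| ≤ Rr)
    (hkey : |c1 * (y1 - s1) - c2 * (y2 - s2)| ≤ ρ * |y1 - y2|) :
    |c1 * y1 + d1 - (c2 * y2 + d2)| ≤ ρ * |y1 - y2| + (2 * A * Rr + 2 * B) := by
  have h1 : |c1 * s1| ≤ A * Rr := key1 ha1 hs1
  have h2 : |c2 * s2| ≤ A * Rr := key1 ha2 hs2
  have e : c1 * y1 + d1 - (c2 * y2 + d2)
      = (c1 * (y1 - s1) - c2 * (y2 - s2)) + ((c1 * s1 + d1) - (c2 * s2 + d2)) := by ring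
  rw [e]
  calc |(c1 * (y1 - s1) - c2 * (y2 - s2)) + ((c1 * s1 + d1) - (c2 * s2 + d2))|
      ≤ |c1 * (y1 - s1) - c2 * (y2 - s2)| + |(c1 * s1 + d1) - (c2 * s2 + d2)| := abs_add_le _ _
    _ ≤ ρ * |y1 - y2| + (|c1 * s1| + |d1| + (|c2 * s2| + |d2|)) := by
        have t1 : |(c1 * s1 + d1) - (c2 * s2 + d2)| ≤ |c1 * s1 + d1| + |c2 * s2 + d2| :=
          abs_sub _ _
        have t2 : |c1 * s1 + d1| ≤ |c1 * s1| + |d1| := abs_add_le _ _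
        have t3 : |c2 * s2 + d2| ≤ |c2 * s2| + |d2| := abs_add_le _ _
        linarith
    _ ≤ ρ * |y1 - y2| + (2 * A * Rr + 2 * B) := by linarith

theorem aux_main (m : ℕ) (hm : 2 ≤ m) (r : ℕ → ℝ)
    (hr : ∀ i j, 1 ≤ i → i < j → j ≤ m - 1 → r i < r j)
    (a b : ℕ → ℝ) (Reg : ℕ → Set ℝ)
    (hReg1 : Reg 1 = Set.Iic (r 1))
    (hRegm : Reg m = Set.Ioi (r (m - 1)))
    (hRegi : ∀ i, 2 ≤ i → i ≤ m - 1 → Reg i = Set.Ioc (r (i - 1)) (r i))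
    (μ : ℝ → ℝ)
    (hμ : ∀ y, μ y = ∑ i ∈ Finset.Icc 1 m,
      Set.indicator (Reg i) (fun _ => a i * y + b i) y)
    (A B Rr : ℝ)
    (hA : ∀ k, 1 ≤ k → k ≤ m → |a k| ≤ A)
    (hB : ∀ k, 1 ≤ k → k ≤ m → |b k| ≤ B)
    (hRr : ∀ k, 1 ≤ k → k ≤ m - 1 → |r k| ≤ Rr) :
    ∀ y y' : ℝ, |μ y - μ y'| ≤ max |a 1| |a m| * |y - y'| + (2 * A * Rr + 2 * B) := by
  classical
  have h1m : 1 ≤ m - 1 := by omega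
  have hmono : ∀ i j, 1 ≤ i → i ≤ j → j ≤ m - 1 → r i ≤ r j := by
    intro i j h1 hij hj
    rcases eq_or_lt_of_le hij with h | h
    · rw [h]
    · exact (hr i j h1 h hj).le
  have memIff : ∀ (z : ℝ) i, 1 ≤ i → i ≤ m → (z ∈ Reg i ↔
      ((i = 1 ∧ z ≤ r 1) ∨ (i = m ∧ r (m - 1) < z) ∨
        (2 ≤ i ∧ i ≤ m - 1 ∧ r (i - 1) < z ∧ z ≤ r i))) := by
    intro z i h1 h2
    rcases eq_or_ne i 1 with h | h
    · subst h
      rw [hReg1, Set.mem_Iic]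
      constructor
      · intro hz; exact Or.inl ⟨rfl, hz⟩
      · rintro (⟨_, hz⟩ | ⟨he, _⟩ | ⟨he, _, _, _⟩)
        · exact hz
        · omega
        · omega
    rcases eq_or_ne i m with h' | h'
    · subst h'
      rw [hRegm, Set.mem_Ioi]
      constructor
      · intro hz; exact Or.inr (Or.inl ⟨rfl, hz⟩)
      · rintro (⟨he, _⟩ | ⟨_, hz⟩ | ⟨_, he, _, _⟩)
        · omega
        · exact hz
        · omega
    · have h2' : 2 ≤ i ∧ i ≤ m - 1 := by omega
      rw [hRegi i h2'.1 h2'.2, Set.mem_Ioc]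
      constructor
      · intro hz; exact Or.inr (Or.inr ⟨h2'.1, h2'.2, hz.1, hz.2⟩)
      · rintro (⟨he, _⟩ | ⟨he, _⟩ | ⟨_, _, hz1, hz2⟩)
        · omega
        · omega
        · exact ⟨hz1, hz2⟩
  have uniqC : ∀ (z : ℝ) i j, 1 ≤ i → i ≤ m → 1 ≤ j → j ≤ m →
      ((i = 1 ∧ z ≤ r 1) ∨ (i = m ∧ r (m - 1) < z) ∨
        (2 ≤ i ∧ i ≤ m - 1 ∧ r (i - 1) < z ∧ z ≤ r i)) →
      ((j = 1 ∧ z ≤ r 1) ∨ (j = m ∧ r (m - 1) < z) ∨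
        (2 ≤ j ∧ j ≤ m - 1 ∧ r (j - 1) < z ∧ z ≤ r j)) → i = j := by
    intro z i j hi1 him hj1 hjm hCi hCj
    have hr1m : r 1 ≤ r (m - 1) := hmono 1 (m - 1) le_rfl h1m le_rfl
    rcases hCi with ⟨hi, hyi⟩ | ⟨hi, hyi⟩ | ⟨hi2, hi3, hyi1, hyi2⟩ <;>
      rcases hCj with ⟨hj, hyj⟩ | ⟨hj, hyj⟩ | ⟨hj2, hj3, hyj1, hyj2⟩
    · omega
    · exfalso; linarith
    · exfalso
      have : r 1 ≤ r (j - 1) := hmono 1 (j - 1) le_rfl (by omega) (by omega)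
      linarith
    · exfalso; linarith
    · omega
    · exfalso
      have : r j ≤ r (m - 1) := hmono j (m - 1) (by omega) (by omega) le_rfl
      linarith
    · exfalso
      have : r 1 ≤ r (i - 1) := hmono 1 (i - 1) le_rfl (by omega) (by omega)
      linarith
    · exfalso
      have : r i ≤ r (m - 1) := hmono i (m - 1) (by omega) (by omega) le_rfl
      linarith
    · rcases lt_trichotomy i j with h | h | h
      · exfalso
        have : r i ≤ r (j - 1) := hmono i (j - 1) (by omega) (by omega) (by omega)
        linarith
      · exact h
      · exfalso
        have : r j ≤ r (i - 1) := hmono j (i - 1) (by omega) (by omega) (by omega)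
        linarith
  have μval : ∀ (z : ℝ) i, 1 ≤ i → i ≤ m →
      ((i = 1 ∧ z ≤ r 1) ∨ (i = m ∧ r (m - 1) < z) ∨
        (2 ≤ i ∧ i ≤ m - 1 ∧ r (i - 1) < z ∧ z ≤ r i)) →
      μ z = a i * z + b i := by
    intro z i h1 h2 hC
    rw [hμ z]
    rw [Finset.sum_eq_single_of_mem i (Finset.mem_Icc.mpr ⟨h1, h2⟩)]
    · exact Set.indicator_of_mem ((memIff z i h1 h2).mpr hC) _
    · intro j hj hne
      apply Set.indicator_of_notMem
      intro hmem
      obtain ⟨hj1, hj2⟩ := Finset.mem_Icc.mp hj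
      exact hne (uniqC z j i hj1 hj2 h1 h2 ((memIff z j hj1 hj2).mp hmem) hC)
  have exC : ∀ z : ℝ, ∃ i, 1 ≤ i ∧ i ≤ m ∧
      ((i = 1 ∧ z ≤ r 1) ∨ (i = m ∧ r (m - 1) < z) ∨
        (2 ≤ i ∧ i ≤ m - 1 ∧ r (i - 1) < z ∧ z ≤ r i)) := by
    intro z
    by_cases h1 : z ≤ r 1
    · exact ⟨1, le_rfl, by omega, Or.inl ⟨rfl, h1⟩⟩
    by_cases h2 : r (m - 1) < z
    · exact ⟨m, by omega, le_rfl, Or.inr (Or.inl ⟨rfl, h2⟩)⟩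
    push_neg at h1 h2
    have hP : ∃ k, 2 ≤ k ∧ k ≤ m - 1 ∧ z ≤ r k := by
      refine ⟨m - 1, ?_, le_rfl, h2⟩
      by_contra hc
      push_neg at hc
      have hm1 : m - 1 = 1 := by omega
      rw [hm1] at h2
      linarith
    obtain ⟨hi2, him, hiz⟩ := Nat.find_spec hP
    refine ⟨Nat.find hP, by omega, by omega, Or.inr (Or.inr ⟨hi2, him, ?_, hiz⟩)⟩
    by_cases hI : Nat.find hP = 2
    · rw [hI]
      norm_num
      exact h1
    · have h3 : 3 ≤ Nat.find hP := by omega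
      have hmin := Nat.find_min hP (m := Nat.find hP - 1) (by omega)
      push_neg at hmin
      have := hmin (by omega) (by omega)
      linarith
  intro y y'
  obtain ⟨i, hi1, him, hCi⟩ := exC y
  obtain ⟨j, hj1, hjm, hCj⟩ := exC y'
  rw [μval y i hi1 him hCi, μval y' j hj1 hjm hCj]
  have hρ1 : |a 1| ≤ max |a 1| |a m| := le_max_left _ _
  have hρm : |a m| ≤ max |a 1| |a m| := le_max_right _ _
  have hAi : |a i| ≤ A := hA i hi1 him
  have hAj : |a j| ≤ A := hA j hj1 hjm
  have hBi : |b i| ≤ B := hB i hi1 him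
  have hBj : |b j| ≤ B := hB j hj1 hjm
  have hRr1 : |r 1| ≤ Rr := hRr 1 le_rfl h1m
  have hRrm : |r (m - 1)| ≤ Rr := hRr (m - 1) h1m le_rfl
  have hr1m : r 1 ≤ r (m - 1) := hmono 1 (m - 1) le_rfl h1m le_rfl
  have intbd : ∀ (z : ℝ) k, 2 ≤ k → k ≤ m - 1 → r (k - 1) < z → z ≤ r k → |z| ≤ Rr := by
    intro z k h2 hk hlt hle
    have e1 : |r (k - 1)| ≤ Rr := hRr (k - 1) (by omega) (by omega)
    have e2 : |r k| ≤ Rr := hRr k (by omega) hk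
    rw [abs_le] at e1 e2 ⊢
    exact ⟨by linarith [e1.1], by linarith [e2.2]⟩
  rcases hCi with ⟨hi, hy1⟩ | ⟨hi, hy1⟩ | ⟨hi2, hi3, hy1, hy2⟩ <;>
    rcases hCj with ⟨hj, hz1⟩ | ⟨hj, hz1⟩ | ⟨hj2, hj3, hz1, hz2⟩
  · -- (1,1)
    subst hi; subst hj
    refine helper hAi hAj hBi hBj hRr1 hRr1 ?_
    have e : a 1 * (y - r 1) - a 1 * (y' - r 1) = a 1 * (y - y') := by ring
    rw [e]
    exact key1 hρ1 le_rfl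
  · -- (1,m)
    subst hi
    rw [hj] at hAj hBj ⊢
    have hyy : y ≤ y' := by linarith
    have habs : |y - y'| = y' - y := by
      rw [abs_sub_comm]; exact abs_of_nonneg (by linarith)
    refine helper hAi hAj hBi hBj hRr1 hRrm ?_
    rw [habs]
    exact key2 hρ1 hρm (by linarith) (by linarith) (by linarith)
  · -- (1,int)
    subst hi
    have hr1j : r 1 ≤ r (j - 1) := hmono 1 (j - 1) le_rfl (by omega) (by omega)
    have habs : |y - y'| = y' - y := by
      rw [abs_sub_comm]; exact abs_of_nonneg (by linarith)
    refine helper hAi hAj hBi hBj hRr1 (intbd y' j hj2 hj3 hz1 hz2) ?_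
    have e : a 1 * (y - r 1) - a j * (y' - y') = a 1 * (y - r 1) := by ring
    rw [e, habs]
    exact key1 hρ1 (by rw [abs_of_nonpos (by linarith : y - r 1 ≤ 0)]; linarith)
  · -- (m,1)
    rw [hi] at hAi hBi ⊢
    subst hj
    have hyy : y' ≤ y := by linarith
    have habs : |y - y'| = y - y' := abs_of_nonneg (by linarith)
    refine helper hAi hAj hBi hBj hRrm hRr1 ?_
    rw [abs_sub_comm, habs]
    exact key2 hρ1 hρm (by linarith) (by linarith) (by linarith)
  · -- (m,m)
    rw [hi] at hAi hBi ⊢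
    rw [hj] at hAj hBj ⊢
    refine helper hAi hAj hBi hBj hRrm hRrm ?_
    have e : a m * (y - r (m - 1)) - a m * (y' - r (m - 1)) = a m * (y - y') := by ring
    rw [e]
    exact key1 hρm le_rfl
  · -- (m,int)
    rw [hi] at hAi hBi ⊢
    have hjr : r j ≤ r (m - 1) := hmono j (m - 1) (by omega) (by omega) le_rfl
    have habs : |y - y'| = y - y' := abs_of_nonneg (by linarith)
    refine helper hAi hAj hBi hBj hRrm (intbd y' j hj2 hj3 hz1 hz2) ?_
    have e : a m * (y - r (m - 1)) - a j * (y' - y') = a m * (y - r (m - 1)) := by ring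
    rw [e, habs]
    exact key1 hρm (by rw [abs_of_nonneg (by linarith : (0:ℝ) ≤ y - r (m - 1))]; linarith)
  · -- (int,1)
    subst hj
    have h1i : r 1 ≤ r (i - 1) := hmono 1 (i - 1) le_rfl (by omega) (by omega)
    have habs : |y - y'| = y - y' := abs_of_nonneg (by linarith)
    refine helper hAi hAj hBi hBj (intbd y i hi2 hi3 hy1 hy2) hRr1 ?_
    have e : a i * (y - y) - a 1 * (y' - r 1) = -(a 1 * (y' - r 1)) := by ring
    rw [e, abs_neg, habs]
    exact key1 hρ1 (by rw [abs_of_nonpos (by linarith : y' - r 1 ≤ 0)]; linarith)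
  · -- (int,m)
    rw [hj] at hAj hBj ⊢
    have him' : r i ≤ r (m - 1) := hmono i (m - 1) (by omega) (by omega) le_rfl
    have habs : |y - y'| = y' - y := by
      rw [abs_sub_comm]; exact abs_of_nonneg (by linarith)
    refine helper hAi hAj hBi hBj (intbd y i hi2 hi3 hy1 hy2) hRrm ?_
    have e : a i * (y - y) - a m * (y' - r (m - 1)) = -(a m * (y' - r (m - 1))) := by ring
    rw [e, abs_neg, habs]
    exact key1 hρm (by rw [abs_of_nonneg (by linarith : (0:ℝ) ≤ y' - r (m - 1))]; linarith)
  · -- (int,int)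
    refine helper hAi hAj hBi hBj (intbd y i hi2 hi3 hy1 hy2) (intbd y' j hj2 hj3 hz1 hz2) ?_
    have e : a i * (y - y) - a j * (y' - y') = 0 := by ring
    rw [e, abs_zero]
    exact mul_nonneg ((abs_nonneg (a 1)).trans hρ1) (abs_nonneg _)

theorem stmt_11 (m : ℕ) (hm : 2 ≤ m) (r : ℕ → ℝ)
    (hr : ∀ i j, 1 ≤ i → i < j → j ≤ m - 1 → r i < r j)
    (a b : ℕ → ℝ)
    (Reg : ℕ → Set ℝ)
    (hReg1 : Reg 1 = Set.Iic (r 1))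
    (hRegm : Reg m = Set.Ioi (r (m - 1)))
    (hRegi : ∀ i, 2 ≤ i → i ≤ m - 1 → Reg i = Set.Ioc (r (i - 1)) (r i))
    (μ : ℝ → ℝ)
    (hμ : ∀ y, μ y = ∑ i ∈ Finset.Icc 1 m,
      Set.indicator (Reg i) (fun _ => a i * y + b i) y)
    (hρ : max |a 1| |a m| < 1) :
    ∀ y y' : ℝ, |μ y - μ y'| ≤ max |a 1| |a m| * |y - y'| +
      (2 * ((Finset.Icc 1 m).sup' (Finset.nonempty_Icc.mpr (by omega)) fun i => |a i|)
          * ((Finset.Icc 1 (m - 1)).sup' (Finset.nonempty_Icc.mpr (by omega)) fun i => |r i|)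
        + 2 * ((Finset.Icc 1 m).sup' (Finset.nonempty_Icc.mpr (by omega)) fun i => |b i|)) := by
  intro y y'
  exact aux_main m hm r hr a b Reg hReg1 hRegm hRegi μ hμ
    ((Finset.Icc 1 m).sup' (Finset.nonempty_Icc.mpr (by omega)) fun i => |a i|)
    ((Finset.Icc 1 m).sup' (Finset.nonempty_Icc.mpr (by omega)) fun i => |b i|)
    ((Finset.Icc 1 (m - 1)).sup' (Finset.nonempty_Icc.mpr (by omega)) fun i => |r i|)
    (fun k h1 h2 => Finset.le_sup' (fun i => |a i|) (Finset.mem_Icc.mpr ⟨h1, h2⟩))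
    (fun k h1 h2 => Finset.le_sup' (fun i => |b i|) (Finset.mem_Icc.mpr ⟨h1, h2⟩))
    (fun k h1 h2 => Finset.le_sup' (fun i => |r i|) (Finset.mem_Icc.mpr ⟨h1, h2⟩))
    y y'
end

section
/- Let E be a Polish metric space with metric d (equipped with its Borel σ-algebra), F a measurable space, k ≥ 1, and f : E × F × ℝ^k → E jointly measurable. Let m_ε be a probability measure on ℝ^k, and for x ∈ F let P_x be the Markov kernel on E given by P_x(y,A) = m_ε{e : f(y,x,e) ∈ A}. Suppose: (Assumption D) there are ρ ∈ (0,1) and R > 0 with d(f(y₁,x,e), f(y₂,x,e)) ≤ ρ·d(y₁,y₂) + R for all y₁,y₂ ∈ E, x ∈ F, e ∈ ℝ^k; (Assumption M) there are a function η : F → (0,1], a constant K > 0, and a jointly measurable family of probability measures ν(x,y₁,y₂) on E such that for all y₁,y₂ ∈ E with 0 < d(y₁,y₂) ≤ 2R/(1−ρ), all x ∈ F, all Borel A ⊆ E and i = 1,2: P_x(y_i,A) ≥ η(x)·ν(x,y₁,y₂)(A) and ν(x,y₁,y₂)(B_K(y_i)) = 1. Set ρ' = (1+ρ)/2 and R'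 = 2R/(1−ρ), and let N be a positive integer with ρ'^{N−1} ≤ R'/(4R'+4K). Then for every n ≥ 2, every x₀,…,x_{n−1} ∈ F, every y, y' ∈ E and every Borel set A ⊆ E, |δ_y P_{x₀}⋯P_{x_{n−1}}(A) − δ_{y'} P_{x₀}⋯P_{x_{n−1}}(A)| ≤ 1_{d(y,y') ≥ R'/ρ'^{⌊n/2⌋}} + ∏_{k=1}^{k*(n)} (1 − η(x_{⌊n/2⌋ + kN − 1})), where k*(n) = ⌊⌈n/2⌉/N⌋. -/
/-!
Let `ψ t z` be the probability that the chain started at `z` at time `t` is in `A` at time `n`;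
`ψ t` is `ψ (t + 1)` averaged over one step of `P_{x t}`. We bound how much `ψ t` can increase
between points at distance at most `D`. Driving two copies with the same noise, assumption D
turns such a bound at distance `ρ D + R` for `ψ (t + 1)` into the same bound at distance `D` for
`ψ t`, so distances contract at rate `ρ' = (1 + ρ) / 2` down to the scale `R' = 2 R / (1 - ρ)`.
At distance at most `R'`, assumption M lets the two copies meet with probability `η`, while the
rest of their laws can be coupled at distance at most `2 (K + R')`; this multiplies the bound by
`1 - η`. The second half
of the time interval splits into `⌊⌈n/2⌉/N⌋` blocks of length `N`, each ending with such a
meeting attempt, and the choice of `N` makes the `N - 1` contracting steps of a block bring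
`2 (K + R')` back below `R'`. The first `⌊n/2⌋` steps bring `R' / ρ'^⌊n/2⌋` down to `R'`.
-/

open MeasureTheory

/-- `mcreIter f mEps x n y = δ_y P_{x 0} ⋯ P_{x (n-1)}`: the law after `n` steps of the
Markov chain in the frozen environment `x 0, …, x (n-1)`, started at `y`, where the
one-step kernel is `P_x(y, A) = mEps {e | f y x e ∈ A}`. -/
noncomputable def mcreIter {E F : Type*} [MeasurableSpace E] {k : ℕ}
    (f : E → F → (Fin k → ℝ) → E) (mEps : Measure (Fin k → ℝ)) (x : ℕ → F) :
    ℕ → E → Measure E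
  | 0, y => Measure.dirac y
  | n+1, y => (mcreIter f mEps x n y).bind
      fun z => Measure.map (fun e => f z (x n) e) mEps

open Metric Set
open scoped ENNReal

section Oscillation

variable {E : Type*} [PseudoMetricSpace E]

def OscLE (ψ : E → ℝ≥0∞) (D : ℝ) (c : ℝ≥0∞) : Prop :=
  ∀ a b, dist a b ≤ D → ψ a ≤ ψ b + c

variable {ψ : E → ℝ≥0∞} {D D' : ℝ} {c : ℝ≥0∞}

lemma OscLE.anti (h : OscLE ψ D c) (hD : D' ≤ D) : OscLE ψ D' c :=
  fun a b hab => h a b (hab.trans hD)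

lemma oscLE_one_of_le_one (hψ : ∀ z, ψ z ≤ 1) (D : ℝ) : OscLE ψ D 1 :=
  fun a _ _ => (hψ a).trans le_add_self

lemma OscLE.le_of_mem_closedBall {z : E} {r : ℝ} (h : OscLE ψ (2 * r) c) {a b : E}
    (ha : a ∈ closedBall z r) (hb : b ∈ closedBall z r) : ψ a ≤ ψ b + c :=
  h a b (by linarith [dist_triangle_right a b z, mem_closedBall.1 ha, mem_closedBall.1 hb])

lemma OscLE.lintegral_comp {α : Type*} [MeasurableSpace α] {m : Measure α}
    [IsProbabilityMeasure m] {g : E → α → E}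
    (hg : ∀ y₁ y₂, dist y₁ y₂ ≤ D → ∀ e, dist (g y₁ e) (g y₂ e) ≤ D') (h : OscLE ψ D' c) :
    OscLE (fun z => ∫⁻ e, ψ (g z e) ∂m) D c := by
  intro a b hab
  calc ∫⁻ e, ψ (g a e) ∂m ≤ ∫⁻ e, (ψ (g b e) + c) ∂m :=
        lintegral_mono fun e => h _ _ (hg a b hab e)
    _ = ∫⁻ e, ψ (g b e) ∂m + c := by
        rw [lintegral_add_right _ measurable_const, lintegral_const, measure_univ, mul_one]

lemma OscLE.abs_toReal_sub_le {D₀ : ℝ} (h : OscLE ψ D c) (hψ : ∀ z, ψ z ≤ 1) (hc : c ≠ ∞)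
    (hD : D₀ ≤ D) (y y' : E) :
    |(ψ y).toReal - (ψ y').toReal| ≤ (if D₀ ≤ dist y y' then 1 else 0) + c.toReal := by
  have hfin : ∀ z, ψ z ≠ ∞ := fun z => ((hψ z).trans_lt ENNReal.one_lt_top).ne
  have hunit : ∀ z, (ψ z).toReal ∈ Icc (0 : ℝ) 1 := fun z =>
    ⟨ENNReal.toReal_nonneg, ENNReal.toReal_le_of_le_ofReal zero_le_one (by simpa using hψ z)⟩
  have hreal : ∀ a b, dist a b ≤ D → (ψ a).toReal ≤ (ψ b).toReal + c.toReal := fun a b hab => by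
    rw [← ENNReal.toReal_add (hfin b) hc]
    exact ENNReal.toReal_mono (ENNReal.add_ne_top.2 ⟨hfin b, hc⟩) (h a b hab)
  have hc0 : 0 ≤ c.toReal := ENNReal.toReal_nonneg
  split_ifs with hfar
  · obtain ⟨hy₀, hy₁⟩ := hunit y
    obtain ⟨hy'₀, hy'₁⟩ := hunit y'
    rw [abs_sub_le_iff]
    constructor <;> linarith
  · have hyy : dist y y' ≤ D := (not_le.1 hfar).le.trans hD
    rw [zero_add, abs_sub_le_iff]
    exact ⟨by linarith [hreal y y' hyy], by linarith [hreal y' y (dist_comm y y' ▸ hyy)]⟩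

end Oscillation

section Coupling

variable {α β : Type*} [MeasurableSpace α] [MeasurableSpace β]

lemma lintegral_le_lintegral_add_of_ae_mem {μ ν : Measure α} {s : Set α} {ψ : α → ℝ≥0∞}
    {c : ℝ≥0∞} (hμ : ∀ᵐ a ∂μ, a ∈ s) (hν : ∀ᵐ b ∂ν, b ∈ s) (hμν : μ univ = ν univ)
    (hψ : ∀ a ∈ s, ∀ b ∈ s, ψ a ≤ ψ b + c) :
    ∫⁻ a, ψ a ∂μ ≤ ∫⁻ b, ψ b ∂ν + c * ν univ := by
  calc ∫⁻ a, ψ a ∂μ ≤ ∫⁻ _, ⨆ a ∈ s, ψ a ∂μ :=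
        lintegral_mono_ae (hμ.mono fun a ha => le_iSup₂ (f := fun a (_ : a ∈ s) => ψ a) a ha)
    _ = ∫⁻ _, ⨆ a ∈ s, ψ a ∂ν := by rw [lintegral_const, lintegral_const, hμν]
    _ ≤ ∫⁻ b, (ψ b + c) ∂ν :=
        lintegral_mono_ae (hν.mono fun b hb => iSup₂_le fun a ha => hψ a ha b hb)
    _ = ∫⁻ b, ψ b ∂ν + c * ν univ := by rw [lintegral_add_right _ measurable_const, lintegral_const]

lemma lintegral_fst_le_lintegral_snd_add {π : Measure (α × α)} {ψ : α → ℝ≥0∞}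
    (hψ : Measurable ψ) {c : ℝ≥0∞} (h : ∀ᵐ p ∂π, ψ p.1 ≤ ψ p.2 + c) :
    ∫⁻ a, ψ a ∂π.fst ≤ ∫⁻ b, ψ b ∂π.snd + c * π univ := by
  rw [Measure.fst, Measure.snd, lintegral_map hψ measurable_fst, lintegral_map hψ measurable_snd,
    ← lintegral_const, ← lintegral_add_right _ measurable_const]
  exact lintegral_mono_ae h

lemma le_map_restrict_of_le_map {γ : Measure α} {ν : Measure β} {g : α → β} (hg : Measurable g)
    {B : Set β} (hB : MeasurableSet B) {T : Set α} (hν : ν ≤ γ.map g) (hνB : ν Bᶜ = 0)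
    (hBT : g ⁻¹' B ⊆ T) : ν ≤ (γ.restrict T).map g := by
  refine Measure.le_iff.2 fun s hs => ?_
  rw [Measure.map_apply hg hs, Measure.restrict_apply (hg hs)]
  calc ν s = ν (s ∩ B) := (measure_inter_conull hνB).symm
    _ ≤ γ.map g (s ∩ B) := Measure.le_iff'.1 hν _
    _ ≤ γ (g ⁻¹' s ∩ T) := by
        rw [Measure.map_apply hg (hs.inter hB)]
        exact measure_mono fun p hp => ⟨hp.1, hBT hp.2⟩

variable {E : Type*} [PseudoMetricSpace E] [MeasurableSpace E] [OpensMeasurableSpace E]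

lemma ae_restrict_mem_closedBall_of_ae_dist_le {γ : Measure (E × E)} {z : E} {K r : ℝ}
    (hγ : ∀ᵐ p ∂γ, dist p.1 p.2 ≤ r) :
    ∀ᵐ p ∂γ.restrict (Prod.fst ⁻¹' closedBall z K ∪ Prod.snd ⁻¹' closedBall z K),
      p.1 ∈ closedBall z (K + r) ∧ p.2 ∈ closedBall z (K + r) := by
  have hT : MeasurableSet (Prod.fst ⁻¹' closedBall z K ∪ Prod.snd ⁻¹' closedBall z K) :=
    (measurable_fst measurableSet_closedBall).union (measurable_snd measurableSet_closedBall)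
  filter_upwards [ae_restrict_mem hT, ae_restrict_of_ae hγ] with p hpT hp
  simp only [mem_union, mem_preimage, mem_closedBall] at hpT ⊢
  rcases hpT with h | h <;> constructor <;>
    linarith [dist_triangle p.1 p.2 z, dist_triangle p.2 p.1 z, dist_comm p.1 p.2]

/-- The part of `γ` with no coordinate in `closedBall z K` is compared along the coupling; what
is left of either marginal after removing the common part `ν` lives in `closedBall z (K + r)`. -/
theorem lintegral_fst_le_lintegral_snd_add_of_le_fst_of_le_snd {γ : Measure (E × E)}
    [IsFiniteMeasure γ] {ν : Measure E} (hν₁ : ν ≤ γ.fst) (hν₂ : ν ≤ γ.snd) {z : E} {K r : ℝ}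
    (hνK : ν (closedBall z K)ᶜ = 0) (hγ : ∀ᵐ p ∂γ, dist p.1 p.2 ≤ r) {ψ : E → ℝ≥0∞}
    (hψ : Measurable ψ) {c : ℝ≥0∞} (hK : 0 ≤ K) (hosc : OscLE ψ (2 * (K + r)) c) :
    ∫⁻ a, ψ a ∂γ.fst ≤ ∫⁻ b, ψ b ∂γ.snd + c * (γ univ - ν univ) := by
  set B := closedBall z K
  set T : Set (E × E) := Prod.fst ⁻¹' B ∪ Prod.snd ⁻¹' B
  have hB : MeasurableSet B := measurableSet_closedBall
  have hT : MeasurableSet T := (measurable_fst hB).union (measurable_snd hB)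
  set π := γ.restrict T
  have : IsFiniteMeasure ν := isFiniteMeasure_of_le _ hν₁
  have hπ₁ : ν ≤ π.fst := le_map_restrict_of_le_map measurable_fst hB hν₁ hνK subset_union_left
  have hπ₂ : ν ≤ π.snd := le_map_restrict_of_le_map measurable_snd hB hν₂ hνK subset_union_right
  have hball := ae_restrict_mem_closedBall_of_ae_dist_le (z := z) (K := K) hγ
  have hL₁ : ∀ᵐ a ∂(π.fst - ν), a ∈ closedBall z (K + r) :=
    (Measure.absolutelyContinuous_of_le Measure.sub_le).ae_le <|
      (ae_map_iff measurable_fst.aemeasurable measurableSet_closedBall).2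
        (hball.mono fun _ h => h.1)
  have hL₂ : ∀ᵐ b ∂(π.snd - ν), b ∈ closedBall z (K + r) :=
    (Measure.absolutelyContinuous_of_le Measure.sub_le).ae_le <|
      (ae_map_iff measurable_snd.aemeasurable measurableSet_closedBall).2
        (hball.mono fun _ h => h.2)
  have hmass : (π.fst - ν) univ = (π.snd - ν) univ := by
    refine (ENNReal.add_left_inj (measure_ne_top ν univ)).1 ?_
    rw [← Measure.add_apply, ← Measure.add_apply, Measure.sub_add_cancel_of_le hπ₁,
      Measure.sub_add_cancel_of_le hπ₂, Measure.fst_univ, Measure.snd_univ]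
  have hdec₁ : γ.fst = (γ.restrict Tᶜ).fst + (π.fst - ν) + ν := by
    rw [add_assoc, Measure.sub_add_cancel_of_le hπ₁, ← Measure.fst_add,
      Measure.restrict_compl_add_restrict hT]
  have hdec₂ : γ.snd = (γ.restrict Tᶜ).snd + (π.snd - ν) + ν := by
    rw [add_assoc, Measure.sub_add_cancel_of_le hπ₂, ← Measure.snd_add,
      Measure.restrict_compl_add_restrict hT]
  have hrest : γ univ - ν univ = γ.restrict Tᶜ univ + (π.snd - ν) univ := by
    refine ENNReal.sub_eq_of_eq_add (measure_ne_top ν univ) ?_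
    rw [← Measure.snd_univ, hdec₂, Measure.add_apply, Measure.add_apply, Measure.snd_univ]
  calc ∫⁻ a, ψ a ∂γ.fst
      = ∫⁻ a, ψ a ∂(γ.restrict Tᶜ).fst + ∫⁻ a, ψ a ∂(π.fst - ν) + ∫⁻ a, ψ a ∂ν := by
        rw [hdec₁, lintegral_add_measure, lintegral_add_measure]
    _ ≤ (∫⁻ b, ψ b ∂(γ.restrict Tᶜ).snd + c * γ.restrict Tᶜ univ)
          + (∫⁻ b, ψ b ∂(π.snd - ν) + c * (π.snd - ν) univ) + ∫⁻ b, ψ b ∂ν := by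
        gcongr
        · refine lintegral_fst_le_lintegral_snd_add hψ (ae_restrict_of_ae (hγ.mono fun p hp => ?_))
          exact hosc _ _ (by linarith [dist_nonneg (x := p.1) (y := p.2)])
        · exact lintegral_le_lintegral_add_of_ae_mem hL₁ hL₂ hmass fun a ha b hb =>
            hosc.le_of_mem_closedBall ha hb
    _ = ∫⁻ b, ψ b ∂γ.snd + c * (γ univ - ν univ) := by
        rw [hdec₂, lintegral_add_measure, lintegral_add_measure, hrest]
        ring

end Coupling

theorem lintegral_comp_le_add_of_minorization {E : Type*} [PseudoMetricSpace E]
    [SecondCountableTopology E] [MeasurableSpace E] [BorelSpace E] {α : Type*}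
    [MeasurableSpace α] {m : Measure α} [IsProbabilityMeasure m] {g₁ g₂ : α → E}
    (hg₁ : Measurable g₁) (hg₂ : Measurable g₂) {θ : ℝ≥0∞} {ν : Measure E}
    [IsProbabilityMeasure ν] (h₁ : θ • ν ≤ m.map g₁) (h₂ : θ • ν ≤ m.map g₂) {z : E} {K r : ℝ}
    (hνK : ν (closedBall z K) = 1) (hr : ∀ e, dist (g₁ e) (g₂ e) ≤ r) {ψ : E → ℝ≥0∞}
    (hψ : Measurable ψ) {c : ℝ≥0∞} (hK : 0 ≤ K) (hosc : OscLE ψ (2 * (K + r)) c) :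
    ∫⁻ e, ψ (g₁ e) ∂m ≤ ∫⁻ e, ψ (g₂ e) ∂m + c * (1 - θ) := by
  have hg : Measurable fun e => (g₁ e, g₂ e) := hg₁.prodMk hg₂
  have hfst : (m.map fun e => (g₁ e, g₂ e)).fst = m.map g₁ := Measure.fst_map_prodMk hg₂
  have hsnd : (m.map fun e => (g₁ e, g₂ e)).snd = m.map g₂ := Measure.snd_map_prodMk hg₁
  have hθνK : (θ • ν) (closedBall z K)ᶜ = 0 := by
    rw [Measure.smul_apply, measure_compl measurableSet_closedBall (measure_ne_top _ _), hνK]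
    simp
  have hclose : ∀ᵐ p ∂(m.map fun e => (g₁ e, g₂ e)), dist p.1 p.2 ≤ r :=
    (ae_map_iff hg.aemeasurable (measurableSet_le (by fun_prop) measurable_const)).2
      (ae_of_all _ hr)
  have := lintegral_fst_le_lintegral_snd_add_of_le_fst_of_le_snd (hfst ▸ h₁) (hsnd ▸ h₂) hθνK
    hclose hψ hK hosc
  rw [hfst, hsnd, lintegral_map hψ hg₁, lintegral_map hψ hg₂] at this
  rwa [Measure.map_apply hg MeasurableSet.univ, preimage_univ, measure_univ, Measure.smul_apply,
    measure_univ, smul_eq_mul, mul_one] at this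

section MarkovChain

variable {E F : Type*} [MeasurableSpace E] {k : ℕ} {f : E → F → (Fin k → ℝ) → E}
  {mEps : Measure (Fin k → ℝ)}

/-- `δ_z P_{x t} ⋯ P_{x (n - 1)}`. -/
noncomputable def mcreIterFrom (f : E → F → (Fin k → ℝ) → E) (mEps : Measure (Fin k → ℝ))
    (x : ℕ → F) (t n : ℕ) (z : E) : Measure E :=
  mcreIter f mEps (fun i => x (t + i)) (n - t) z

lemma mcreIterFrom_zero (x : ℕ → F) (n : ℕ) (z : E) :
    mcreIterFrom f mEps x 0 n z = mcreIter f mEps x n z := by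
  simp only [mcreIterFrom, zero_add, Nat.sub_zero]

variable [MeasurableSpace F]

lemma measurable_map_step [SFinite mEps]
    (hf : Measurable fun p : E × F × (Fin k → ℝ) => f p.1 p.2.1 p.2.2) (x₀ : F) :
    Measurable fun z => mEps.map fun e => f z x₀ e := by
  have hf₀ : Measurable fun p : E × (Fin k → ℝ) => f p.1 x₀ p.2 := by fun_prop
  refine Measure.measurable_of_measurable_coe _ fun s hs => ?_
  convert measurable_measure_prodMk_left (ν := mEps) (hf₀ hs) using 1
  funext z
  exact Measure.map_apply (hf₀.comp measurable_prodMk_left) hs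

lemma measurable_mcreIter [SFinite mEps]
    (hf : Measurable fun p : E × F × (Fin k → ℝ) => f p.1 p.2.1 p.2.2) (x : ℕ → F) :
    ∀ n, Measurable (mcreIter f mEps x n)
  | 0 => Measure.measurable_dirac
  | n + 1 => (Measure.measurable_bind' (measurable_map_step hf (x n))).comp
      (measurable_mcreIter hf x n)

lemma isProbabilityMeasure_mcreIter [IsProbabilityMeasure mEps]
    (hf : Measurable fun p : E × F × (Fin k → ℝ) => f p.1 p.2.1 p.2.2) (x : ℕ → F) :
    ∀ n y, IsProbabilityMeasure (mcreIter f mEps x n y)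
  | 0, y => by rw [mcreIter]; infer_instance
  | n + 1, y => by
    have := isProbabilityMeasure_mcreIter hf x n y
    exact isProbabilityMeasure_bind (measurable_map_step hf (x n)).aemeasurable
      (ae_of_all _ fun z => Measure.isProbabilityMeasure_map (by fun_prop))

lemma mcreIterFrom_apply_le_one [IsProbabilityMeasure mEps]
    (hf : Measurable fun p : E × F × (Fin k → ℝ) => f p.1 p.2.1 p.2.2) (x : ℕ → F) (t n : ℕ)
    (z : E) (A : Set E) : mcreIterFrom f mEps x t n z A ≤ 1 :=
  haveI := isProbabilityMeasure_mcreIter (mEps := mEps) hf (fun i => x (t + i)) (n - t) z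
  prob_le_one (μ := mcreIter f mEps (fun i => x (t + i)) (n - t) z)

lemma mcreIter_succ' [SFinite mEps]
    (hf : Measurable fun p : E × F × (Fin k → ℝ) => f p.1 p.2.1 p.2.2) (x : ℕ → F) :
    ∀ n y, mcreIter f mEps x (n + 1) y
      = (mEps.map fun e => f y (x 0) e).bind (mcreIter f mEps (fun i => x (i + 1)) n)
  | 0, y => by
    rw [mcreIter, mcreIter, Measure.dirac_bind (measurable_map_step hf _)]
    exact Measure.bind_dirac.symm
  | n + 1, y => by
    rw [mcreIter, mcreIter_succ' hf x n y, Measure.bind_bind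
      (measurable_mcreIter hf _ n).aemeasurable (measurable_map_step hf _).aemeasurable]
    rfl

lemma mcreIterFrom_apply_eq_lintegral [SFinite mEps]
    (hf : Measurable fun p : E × F × (Fin k → ℝ) => f p.1 p.2.1 p.2.2) (x : ℕ → F) {t n : ℕ}
    (ht : t < n) (z : E) {A : Set E} (hA : MeasurableSet A) :
    mcreIterFrom f mEps x t n z A
      = ∫⁻ e, mcreIterFrom f mEps x (t + 1) n (f z (x t) e) A ∂mEps := by
  obtain ⟨m, hm⟩ : ∃ m, n - t = m + 1 := ⟨n - (t + 1), by omega⟩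
  have hmeas : Measurable fun w => mcreIter f mEps (fun i => x (t + (i + 1))) m w A :=
    (Measure.measurable_coe hA).comp
    (measurable_mcreIter (mEps := mEps) hf (fun i => x (t + (i + 1))) m)
  rw [mcreIterFrom, hm, mcreIter_succ' hf, Measure.bind_apply hA
    (measurable_mcreIter hf _ m).aemeasurable, lintegral_map hmeas (by fun_prop)]
  simp only [mcreIterFrom, add_zero, show n - (t + 1) = m by omega, add_assoc, add_comm 1]

end MarkovChain

section MarkovChainOscillation

variable {E F : Type*} [MetricSpace E] [MeasurableSpace E] [MeasurableSpace F] {k : ℕ}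
  {f : E → F → (Fin k → ℝ) → E} {mEps : Measure (Fin k → ℝ)} [IsProbabilityMeasure mEps]
  {x : ℕ → F} {t n : ℕ} {A : Set E} {c : ℝ≥0∞}

lemma oscLE_mcreIterFrom_of_contraction
    (hf : Measurable fun p : E × F × (Fin k → ℝ) => f p.1 p.2.1 p.2.2) (ht : t < n)
    (hA : MeasurableSet A) {ρ R D : ℝ} (hρ : 0 ≤ ρ)
    (hD : ∀ (y₁ y₂ : E) (x₀ : F) (e : Fin k → ℝ), dist (f y₁ x₀ e) (f y₂ x₀ e) ≤ ρ * dist y₁ y₂ + R)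
    (h : OscLE (fun z => mcreIterFrom f mEps x (t + 1) n z A) (ρ * D + R) c) :
    OscLE (fun z => mcreIterFrom f mEps x t n z A) D c := by
  have := h.lintegral_comp (D := D) (m := mEps) (g := fun z e => f z (x t) e) fun y₁ y₂ hy e =>
    (hD y₁ y₂ (x t) e).trans (by gcongr)
  simpa only [mcreIterFrom_apply_eq_lintegral hf x ht _ hA] using this

lemma oscLE_mcreIterFrom_of_minorization [SecondCountableTopology E] [BorelSpace E]
    (hf : Measurable fun p : E × F × (Fin k → ℝ) => f p.1 p.2.1 p.2.2) (ht : t < n)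
    (hA : MeasurableSet A) {ρ R r K : ℝ} (hρ : 0 ≤ ρ)
    (hD : ∀ y₁ y₂ e, dist (f y₁ (x t) e) (f y₂ (x t) e) ≤ ρ * dist y₁ y₂ + R) (hr : ρ * r + R ≤ r)
    {θ : ℝ≥0∞} {ν : E → E → Measure E} (hν : ∀ y₁ y₂, IsProbabilityMeasure (ν y₁ y₂))
    (hmin : ∀ y₁ y₂, 0 < dist y₁ y₂ → dist y₁ y₂ ≤ r →
      (∀ B, MeasurableSet B → θ * ν y₁ y₂ B ≤ mEps.map (fun e => f y₁ (x t) e) B ∧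
        θ * ν y₁ y₂ B ≤ mEps.map (fun e => f y₂ (x t) e) B) ∧
      ν y₁ y₂ (closedBall y₂ K) = 1)
    (hK : 0 ≤ K) (h : OscLE (fun z => mcreIterFrom f mEps x (t + 1) n z A) (2 * (K + r)) c) :
    OscLE (fun z => mcreIterFrom f mEps x t n z A) r (c * (1 - θ)) := by
  intro y₁ y₂ hy
  by_cases hy₁₂ : y₁ = y₂
  · subst hy₁₂
    exact le_self_add
  obtain ⟨hle, hball⟩ := hmin y₁ y₂ (dist_pos.2 hy₁₂) hy
  have := hν y₁ y₂
  simp only [mcreIterFrom_apply_eq_lintegral hf x ht _ hA]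
  exact lintegral_comp_le_add_of_minorization (by fun_prop) (by fun_prop)
    (Measure.le_iff.2 fun B hB => by simpa using (hle B hB).1)
    (Measure.le_iff.2 fun B hB => by simpa using (hle B hB).2) hball
    (fun e => (hD y₁ y₂ e).trans (by nlinarith))
    ((Measure.measurable_coe hA).comp (measurable_mcreIter hf _ _)) hK h

end MarkovChainOscillation

section Chain

variable {E : Type*} [PseudoMetricSpace E] {ψ : ℕ → E → ℝ≥0∞} {n : ℕ} {ρ R a b : ℝ}

lemma oscLE_of_contraction
    (hstep : ∀ t < n, ∀ D c, OscLE (ψ (t + 1)) (ρ * D + R) c → OscLE (ψ t) D c)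
    (hρa : ρ ≤ a) (ha : 0 ≤ a) (hb : ρ * b + R ≤ b) {c : ℝ≥0∞} :
    ∀ m t D, t + m ≤ n → 0 ≤ D → OscLE (ψ (t + m)) (a ^ m * D + b) c → OscLE (ψ t) (D + b) c
  | 0, t, D, _, _, h => by simpa using h
  | m + 1, t, D, htm, hD, h => by
    refine hstep t (by omega) _ c ((oscLE_of_contraction hstep hρa ha hb m (t + 1) (a * D)
      (by omega) (by positivity) ?_).anti ?_)
    · convert h using 2 <;> ring
    · nlinarith [mul_le_mul_of_nonneg_right hρa hD]

lemma oscLE_of_minorization_block {q : ℕ → ℝ≥0∞} {r D₁ : ℝ} {N s : ℕ}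
    (hstep : ∀ t < n, ∀ D c, OscLE (ψ (t + 1)) (ρ * D + R) c → OscLE (ψ t) D c)
    (hρa : ρ ≤ a) (ha : 0 ≤ a) (hb : ρ * b + R ≤ b)
    (hmin : ∀ t < n, ∀ c, OscLE (ψ (t + 1)) D₁ c → OscLE (ψ t) r (c * q t))
    (hN : 1 ≤ N) (hs : s + N ≤ n) (hbD : b ≤ D₁) (hr : a ^ (N - 1) * (D₁ - b) + b ≤ r)
    {c : ℝ≥0∞} (h : OscLE (ψ (s + N)) D₁ c) : OscLE (ψ s) D₁ (c * q (s + N - 1)) := by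
  have hattempt : OscLE (ψ (s + (N - 1))) r (c * q (s + N - 1)) := by
    rw [show s + N - 1 = s + (N - 1) by omega]
    exact hmin _ (by omega) c (by convert h using 2; omega)
  simpa using oscLE_of_contraction hstep hρa ha hb (N - 1) s (D₁ - b) (by omega) (by linarith)
    (hattempt.anti hr)

lemma oscLE_of_iterate_block {q : ℕ → ℝ≥0∞} {D₁ : ℝ} {N s : ℕ}
    (hblock : ∀ s', s' + N ≤ n → ∀ c, OscLE (ψ (s' + N)) D₁ c →
      OscLE (ψ s') D₁ (c * q (s' + N - 1))) :
    ∀ j, s + j * N ≤ n → ∀ c, OscLE (ψ (s + j * N)) D₁ c →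
      OscLE (ψ s) D₁ (c * ∏ i ∈ Finset.Icc 1 j, q (s + i * N - 1))
  | 0, _, c, h => by simpa using h
  | j + 1, hj, c, h => by
    have hidx : s + j * N + N = s + (j + 1) * N := by ring
    have := oscLE_of_iterate_block hblock j (by nlinarith) _
      (hblock (s + j * N) (by omega) c (hidx ▸ h))
    rwa [Finset.prod_Icc_succ_top (by omega), mul_comm _ (q _), ← mul_assoc, ← hidx]

lemma oscLE_zero_of_minorization_blocks {q : ℕ → ℝ≥0∞} {r D₀ D₁ : ℝ} {N s j : ℕ}
    (hstep : ∀ t < n, ∀ D c, OscLE (ψ (t + 1)) (ρ * D + R) c → OscLE (ψ t) D c)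
    (hρa : ρ ≤ a) (ha : 0 ≤ a) (hb : ρ * b + R ≤ b)
    (hmin : ∀ t < n, ∀ c, OscLE (ψ (t + 1)) D₁ c → OscLE (ψ t) r (c * q t))
    (hN : 1 ≤ N) (hbD : b ≤ D₁) (hr : a ^ (N - 1) * (D₁ - b) + b ≤ r) (hsj : s + j * N ≤ n)
    (hD₀ : 0 ≤ D₀) (hD₀D₁ : a ^ s * D₀ + b ≤ D₁) (hψ : ∀ z, ψ (s + j * N) z ≤ 1) :
    OscLE (ψ 0) (D₀ + b) (∏ i ∈ Finset.Icc 1 j, q (s + i * N - 1)) := by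
  have hblocks := oscLE_of_iterate_block (fun s' hs' c h =>
    oscLE_of_minorization_block hstep hρa ha hb hmin hN hs' hbD hr h) j hsj 1
    (oscLE_one_of_le_one hψ _)
  simpa using oscLE_of_contraction hstep hρa ha hb s 0 D₀ (by omega) hD₀
    (by simpa using hblocks.anti hD₀D₁)

end Chain

lemma mul_sub_add_le_of_le_div {a R K : ℝ} (hR : 0 < R) (hK : 0 ≤ K)
    (ha : a ≤ R / (4 * R + 4 * K)) : a * (2 * (K + R) - R / 2) + R / 2 ≤ R := by
  have h4 : 0 < 4 * R + 4 * K := by linarith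
  calc a * (2 * (K + R) - R / 2) + R / 2
      ≤ R / (4 * R + 4 * K) * (2 * (K + R) - R / 2) + R / 2 := by gcongr; linarith
    _ ≤ R := by
      rw [div_mul_eq_mul_div, div_add' _ _ _ h4.ne', div_le_iff₀ h4]
      nlinarith

theorem stmt_14_general {E : Type*} [MetricSpace E] [PolishSpace E]
    [MeasurableSpace E] [BorelSpace E]
    {F : Type*} [MeasurableSpace F] {k : ℕ}
    (f : E → F → (Fin k → ℝ) → E)
    (hf : Measurable fun p : E × F × (Fin k → ℝ) => f p.1 p.2.1 p.2.2)
    (mEps : Measure (Fin k → ℝ)) [IsProbabilityMeasure mEps]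
    -- Assumption D
    (ρ R : ℝ) (hρ : ρ ∈ Set.Ioo (0:ℝ) 1) (hR : 0 < R)
    (hD : ∀ (y₁ y₂ : E) (x : F) (e : Fin k → ℝ),
      dist (f y₁ x e) (f y₂ x e) ≤ ρ * dist y₁ y₂ + R)
    -- Assumption M
    (η : F → ℝ) (hη : ∀ x, η x ∈ Set.Ioc (0:ℝ) 1) (K : ℝ) (hK : 0 < K)
    (ν : F → E → E → Measure E) (hνprob : ∀ x y₁ y₂, IsProbabilityMeasure (ν x y₁ y₂))
    (hmin : ∀ (x : F) (y₁ y₂ : E), 0 < dist y₁ y₂ → dist y₁ y₂ ≤ 2 * R / (1 - ρ) →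
      (∀ A : Set E, MeasurableSet A →
        ENNReal.ofReal (η x) * ν x y₁ y₂ A ≤ Measure.map (fun e => f y₁ x e) mEps A ∧
        ENNReal.ofReal (η x) * ν x y₁ y₂ A ≤ Measure.map (fun e => f y₂ x e) mEps A) ∧
      ν x y₁ y₂ (Metric.closedBall y₁ K) = 1 ∧ ν x y₁ y₂ (Metric.closedBall y₂ K) = 1)
    -- choice of N
    (N : ℕ) (hN : 1 ≤ N)
    (hNbig : ((1 + ρ) / 2) ^ (N - 1)
      ≤ (2 * R / (1 - ρ)) / (4 * (2 * R / (1 - ρ)) + 4 * K)) :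
    ∀ n : ℕ, 2 ≤ n → ∀ (x : ℕ → F) (y y' : E) (A : Set E), MeasurableSet A →
      |(mcreIter f mEps x n y A).toReal - (mcreIter f mEps x n y' A).toReal|
        ≤ (if (2 * R / (1 - ρ)) / ((1 + ρ) / 2) ^ (n / 2) ≤ dist y y' then 1 else 0)
          + ∏ j ∈ Finset.Icc 1 (((n + 1) / 2) / N), (1 - η (x (n / 2 + j * N - 1))) := by
  intro n _ x y y' A hA
  obtain ⟨hρ₀, hρ₁⟩ := hρ
  set ρ' := (1 + ρ) / 2 with hρ'
  set R' := 2 * R / (1 - ρ) with hR'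
  have hR'pos : 0 < R' := div_pos (by linarith) (by linarith)
  have hR'fix : ρ * (R' / 2) + R = R' / 2 := by
    rw [hR']
    field_simp
    ring
  set ψ : ℕ → E → ℝ≥0∞ := fun t z => mcreIterFrom f mEps x t n z A
  have hψ₁ : ∀ t z, ψ t z ≤ 1 := fun t z => mcreIterFrom_apply_le_one hf x t n z A
  have hstep : ∀ t < n, ∀ D c, OscLE (ψ (t + 1)) (ρ * D + R) c → OscLE (ψ t) D c :=
    fun t ht _ _ => oscLE_mcreIterFrom_of_contraction hf ht hA hρ₀.le hD
  have hattempt : ∀ t < n, ∀ c, OscLE (ψ (t + 1)) (2 * (K + R')) c →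
      OscLE (ψ t) R' (c * (1 - ENNReal.ofReal (η (x t)))) := fun t ht _ =>
    oscLE_mcreIterFrom_of_minorization hf ht hA hρ₀.le (hD · · (x t)) (by nlinarith)
      (hνprob (x t)) (fun y₁ y₂ h₀ hy => ⟨(hmin (x t) y₁ y₂ h₀ hy).1, (hmin (x t) y₁ y₂ h₀ hy).2.2⟩)
      hK.le
  have hosc := oscLE_zero_of_minorization_blocks (a := ρ') (b := R' / 2) (D₀ := R' / ρ' ^ (n / 2))
    (s := n / 2) (j := (n + 1) / 2 / N) hstep (by linarith) (by linarith) (by linarith) hattempt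
    hN (by linarith) (mul_sub_add_le_of_le_div hR'pos hK.le hNbig)
    (by have := Nat.div_mul_le_self ((n + 1) / 2) N; omega) (by positivity)
    (by rw [mul_div_cancel₀ _ (by positivity)]; linarith) (hψ₁ _)
  have := hosc.abs_toReal_sub_le (hψ₁ 0) (by simp [ENNReal.prod_ne_top])
    (le_add_of_nonneg_right (by positivity)) y y'
  simp only [ψ, mcreIterFrom_zero, ENNReal.toReal_prod] at this
  convert this using 3
  rw [ENNReal.toReal_sub_of_le (ENNReal.ofReal_le_one.2 (hη _).2) ENNReal.one_ne_top,
    ENNReal.toReal_one, ENNReal.toReal_ofReal (hη _).1.le]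

theorem stmt_14 {E : Type*} [MetricSpace E] [PolishSpace E]
    [MeasurableSpace E] [BorelSpace E]
    {F : Type*} [MeasurableSpace F] {k : ℕ} (hk : 1 ≤ k)
    (f : E → F → (Fin k → ℝ) → E)
    (hf : Measurable fun p : E × F × (Fin k → ℝ) => f p.1 p.2.1 p.2.2)
    (mEps : Measure (Fin k → ℝ)) [IsProbabilityMeasure mEps]
    -- Assumption D
    (ρ R : ℝ) (hρ : ρ ∈ Set.Ioo (0:ℝ) 1) (hR : 0 < R)
    (hD : ∀ (y₁ y₂ : E) (x : F) (e : Fin k → ℝ),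
      dist (f y₁ x e) (f y₂ x e) ≤ ρ * dist y₁ y₂ + R)
    -- Assumption M
    (η : F → ℝ) (hη : ∀ x, η x ∈ Set.Ioc (0:ℝ) 1) (K : ℝ) (hK : 0 < K)
    (ν : F → E → E → Measure E) (hνprob : ∀ x y₁ y₂, IsProbabilityMeasure (ν x y₁ y₂))
    (hνmeas : ∀ A : Set E, MeasurableSet A →
      Measurable fun p : F × E × E => ν p.1 p.2.1 p.2.2 A)
    (hmin : ∀ (x : F) (y₁ y₂ : E), 0 < dist y₁ y₂ → dist y₁ y₂ ≤ 2 * R / (1 - ρ) →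
      (∀ A : Set E, MeasurableSet A →
        ENNReal.ofReal (η x) * ν x y₁ y₂ A ≤ Measure.map (fun e => f y₁ x e) mEps A ∧
        ENNReal.ofReal (η x) * ν x y₁ y₂ A ≤ Measure.map (fun e => f y₂ x e) mEps A) ∧
      ν x y₁ y₂ (Metric.closedBall y₁ K) = 1 ∧ ν x y₁ y₂ (Metric.closedBall y₂ K) = 1)
    -- choice of N
    (N : ℕ) (hN : 1 ≤ N)
    (hNbig : ((1 + ρ) / 2) ^ (N - 1)
      ≤ (2 * R / (1 - ρ)) / (4 * (2 * R / (1 - ρ)) + 4 * K)) :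
    ∀ n : ℕ, 2 ≤ n → ∀ (x : ℕ → F) (y y' : E) (A : Set E), MeasurableSet A →
      |(mcreIter f mEps x n y A).toReal - (mcreIter f mEps x n y' A).toReal|
        ≤ (if (2 * R / (1 - ρ)) / ((1 + ρ) / 2) ^ (n / 2) ≤ dist y y' then 1 else 0)
          + ∏ j ∈ Finset.Icc 1 (((n + 1) / 2) / N), (1 - η (x (n / 2 + j * N - 1))) :=
  stmt_14_general f hf mEps ρ R hρ hR hD η hη K hK ν hνprob hmin N hN hNbig
end

section
/- Let E = ℝ/2πℤ (the circle) with Haar (arc-length) measure λ normalized so that λ(E) = 2π. Fix α ∈ (π/2, π). For θ ∈ E let A_θ = {θ + ϑ : ϑ ∈ [−α, α]} be the closed arc of half-length α centered at θ, and let P(θ,·) be the uniform probability measure on A_θ, i.e. P(θ,A) = λ(A ∩ A_θ)/(2α) for Borel A ⊆ E. If ν is a (nonnegative Borel) measure on E such that ν(A) ≤ P(θ,A) for every θ ∈ E and every Borel A ⊆ E, then ν = 0. In particular, no nonzero measure is uniformly dominated by all the transition laws P(θ,·), even though each pair P(θ₁,·), P(θ₂,·) admits a common minorizing measure. -/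
/-!
The arc of half-length `α` centred at the antipode `θ + π` misses the open ball of radius
`π - α > 0` around `θ`, so domination by `P(θ + π, ·)` forces `ν` to vanish on that ball. Countably
many such balls cover the circle, hence `ν = 0`.
-/

open MeasureTheory Metric

theorem MeasureTheory.Measure.eq_zero_of_forall_measure_ball_eq_zero {X : Type*}
    [PseudoMetricSpace X] [SecondCountableTopology X] [MeasurableSpace X] {μ : Measure X}
    {r : ℝ} (hr : 0 < r) (h : ∀ x, μ (ball x r) = 0) : μ = 0 := by
  rw [← Measure.measure_univ_eq_zero]
  exact measure_null_of_locally_null _ fun x _ =>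
    ⟨_, nhdsWithin_le_nhds (ball_mem_nhds x hr), h x⟩

namespace AddCircle

theorem sub_abs_le_dist_add_half_period_add {p : ℝ} (x : AddCircle p) (ϑ : ℝ) :
    |p| / 2 - |ϑ| ≤ dist (x + ↑(p / 2) + ↑ϑ) x := by
  rw [dist_eq_norm, add_assoc, add_sub_cancel_left, ← norm_half_period_eq p]
  calc ‖(↑(p / 2) : AddCircle p)‖ - |ϑ| ≤ ‖(↑(p / 2) : AddCircle p)‖ - ‖(ϑ : AddCircle p)‖ :=
        sub_le_sub_left (QuotientAddGroup.norm_mk_le_norm (m := ϑ)) _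
    _ ≤ _ := norm_sub_le_norm_add _ _

theorem disjoint_ball_image_Icc_add_half_period {p : ℝ} (x : AddCircle p) (α : ℝ) :
    Disjoint (ball x (|p| / 2 - α))
      ((fun ϑ : ℝ => x + ↑(p / 2) + (ϑ : AddCircle p)) '' Set.Icc (-α) α) := by
  refine Set.disjoint_right.mpr ?_
  rintro _ ⟨ϑ, hϑ, rfl⟩ hball
  have := sub_abs_le_dist_add_half_period_add x ϑ
  rw [mem_ball] at hball
  linarith [abs_le.mpr hϑ]

end AddCircle

theorem stmt_15 [Fact (0 < 2 * Real.pi)]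
    (α : ℝ) (hα : α ∈ Set.Ioo (Real.pi / 2) Real.pi)
    (ν : Measure (AddCircle (2 * Real.pi)))
    (hdom : ∀ (θ : AddCircle (2 * Real.pi)) (A : Set (AddCircle (2 * Real.pi))),
      MeasurableSet A →
      ν A ≤ volume (A ∩ ((fun ϑ : ℝ => θ + (ϑ : AddCircle (2 * Real.pi))) ''
              Set.Icc (-α) α)) / ENNReal.ofReal (2 * α)) :
    ν = 0 := by
  have hradius : 0 < |2 * Real.pi| / 2 - α := by
    rw [abs_of_pos Real.two_pi_pos]
    linarith [hα.2]
  refine Measure.eq_zero_of_forall_measure_ball_eq_zero hradius fun x => ?_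
  have h := hdom (x + ↑(2 * Real.pi / 2)) (ball x (|2 * Real.pi| / 2 - α)) measurableSet_ball
  rwa [(AddCircle.disjoint_ball_image_Icc_add_half_period x α).inter_eq, measure_empty,
    ENNReal.zero_div, nonpos_iff_eq_zero] at h
end
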